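/- arXiv:2104.14530 — 4 statements merged into one kernel-verified Lean document; each statement's English description precedes it below -/
import Mathlib

section
/- Let σ ∈ B(n) have cycle type (ρ⁺, ρ⁻). Then the reflection length of σ, i.e. the minimal number k such that σ = r₁⋯r_k with all r_i ∈ R = R₊ ∪ R₋, equals ‖ρ⁺‖ + |ρ⁻|. -/
/-!
`B(n)` acts on the `n`-dimensional space `V` of odd functions `ℤ → ℚ` supported in `[-n, n]`,
and the reflection length of `σ` is the codimension of the fixed space `V^σ` (Carter).
A reflection fixes a hyperplane and `V^a ∩ V^b ⊆ V^(ab)`, so a product of `k` reflections has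
a fixed space of codimension at most `k`. Conversely, if `σ` moves `i`, the reflection `r`
exchanging `i` and `σ i` makes `r⁻¹ σ` fix `i` while still fixing `V^σ`, so `V^σ` grows strictly.

A fixed vector is odd and constant on cycles: it vanishes on negative cycles and is
determined by one value per mirror pair of positive cycles. Hence `dim V^σ` is the number of
such pairs (fixed points included), which is `n - ‖ρ⁺‖ - |ρ⁻|` since the cycles partition `[±n]`.
-/

noncomputable section

namespace TypeB

/-- The nontrivial orbits (cycles) of a permutation. -/
def ntOrbits {X : Type*} (σ : Equiv.Perm X) : Set (Set X) :=
  {O | ∃ i : X, σ i ≠ i ∧ O = {j | σ.SameCycle i j}}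

/-- Negation of a set of integers. -/
def negSet (B : Set ℤ) : Set ℤ := (fun x : ℤ => -x) '' B

/-- The negative cycles (orbits invariant under negation). -/
def negOrbits (σ : Equiv.Perm ℤ) : Set (Set ℤ) := {O ∈ ntOrbits σ | negSet O = O}

/-- The positive cycles (orbits not invariant under negation; they come in mirror pairs). -/
def posOrbits (σ : Equiv.Perm ℤ) : Set (Set ℤ) := {O ∈ ntOrbits σ | negSet O ≠ O}

/-- ‖ρ⁺‖, where ρ⁺ is the partition formed by the common lengths of the mirror pairs of
positive cycles (including fixed-point pairs, which contribute parts 1 and do not change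
the statistic). -/
def normPlus (σ : Equiv.Perm ℤ) : ℕ := (∑ᶠ O ∈ posOrbits σ, (O.ncard - 1)) / 2

/-- |ρ⁻|, where ρ⁻ is the partition formed by the half-lengths of the negative cycles. -/
def sizeMinus (σ : Equiv.Perm ℤ) : ℕ := ∑ᶠ O ∈ negOrbits σ, O.ncard / 2

/-- The hyperoctahedral group B(n), realized as permutations of ℤ commuting with negation
and fixing every integer of absolute value bigger than n (hence fixing 0). -/
def Bset (n : ℕ) : Set (Equiv.Perm ℤ) :=
  {σ | (∀ i : ℤ, σ (-i) = -σ i) ∧ ∀ i : ℤ, (n : ℤ) < |i| → σ i = i}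

/-- Long reflections of B(n): (i j)(−i −j) with i,j ∈ [±n], |i| ≠ |j|. -/
def IsLongRefl (n : ℕ) (r : Equiv.Perm ℤ) : Prop :=
  ∃ i j : ℤ, i ≠ 0 ∧ j ≠ 0 ∧ |i| ≤ (n : ℤ) ∧ |j| ≤ (n : ℤ) ∧ |i| ≠ |j| ∧
    r = Equiv.swap i j * Equiv.swap (-i) (-j)

/-- Short reflections of B(n): (i −i) with 1 ≤ i ≤ n. -/
def IsShortRefl (n : ℕ) (r : Equiv.Perm ℤ) : Prop :=
  ∃ i : ℤ, 0 < i ∧ i ≤ (n : ℤ) ∧ r = Equiv.swap i (-i)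

/-- Reflections of B(n). -/
def IsRefl (n : ℕ) (r : Equiv.Perm ℤ) : Prop := IsLongRefl n r ∨ IsShortRefl n r

open Equiv Module

variable {n : ℕ} {σ τ : Perm ℤ}

/-- The paper's `[±n]`. -/
def signedInterval (n : ℕ) : Finset ℤ := (Finset.Icc (-(n : ℤ)) n).erase 0

lemma mem_signedInterval {x : ℤ} : x ∈ signedInterval n ↔ x ≠ 0 ∧ |x| ≤ n := by
  rw [signedInterval, Finset.mem_erase, Finset.mem_Icc, abs_le]

lemma neg_mem_signedInterval {x : ℤ} (hx : x ∈ signedInterval n) : -x ∈ signedInterval n := by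
  rw [mem_signedInterval, abs_neg, neg_ne_zero]
  exact mem_signedInterval.mp hx

def hyperoctahedralGroup (n : ℕ) : Subgroup (Perm ℤ) where
  carrier := Bset n
  one_mem' := ⟨fun _ => rfl, fun _ _ => rfl⟩
  mul_mem' hσ hτ := ⟨fun i => by simp [hτ.1 i, hσ.1],
    fun i hi => by simp [hτ.2 i hi, hσ.2 i hi]⟩
  inv_mem' {σ} hσ := ⟨fun i => σ.injective (by simp [hσ.1]),
    fun i hi => σ.injective (by simp [hσ.2 i hi])⟩

lemma apply_zero_of_mem_Bset (hσ : σ ∈ Bset n) : σ 0 = 0 := by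
  have := hσ.1 0
  simp only [neg_zero] at this
  omega

lemma mem_signedInterval_of_apply_ne (hσ : σ ∈ Bset n) {x : ℤ} (hx : σ x ≠ x) :
    x ∈ signedInterval n := by
  refine mem_signedInterval.mpr ⟨fun h => hx (h ▸ apply_zero_of_mem_Bset hσ), ?_⟩
  by_contra h
  exact hx (hσ.2 x (not_le.mp h))

lemma sameCycle_neg_iff (hσ : σ ∈ Bset n) {x y : ℤ} :
    σ.SameCycle (-x) (-y) ↔ σ.SameCycle x y := by
  have hconj : Equiv.neg ℤ * σ * (Equiv.neg ℤ)⁻¹ = σ := by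
    ext x
    simp [hσ.1]
  conv_lhs => rw [← hconj, Perm.sameCycle_conj]
  simp

lemma sameCycle_neg_left_iff (hσ : σ ∈ Bset n) {x y : ℤ} :
    σ.SameCycle (-x) y ↔ σ.SameCycle x (-y) := by
  rw [← sameCycle_neg_iff hσ, neg_neg]

def orbitOf (σ : Perm ℤ) (x : ℤ) : Set ℤ := {y | σ.SameCycle x y}

lemma orbitOf_eq_iff {x y : ℤ} : orbitOf σ x = orbitOf σ y ↔ σ.SameCycle x y := by
  refine ⟨fun h => ?_, fun h => Set.ext fun z => ⟨h.symm.trans, h.trans⟩⟩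
  have : y ∈ orbitOf σ y := Perm.SameCycle.refl σ y
  rwa [← h] at this

lemma negSet_orbitOf (hσ : σ ∈ Bset n) (x : ℤ) : negSet (orbitOf σ x) = orbitOf σ (-x) := by
  ext y
  refine ⟨?_, fun h => ⟨-y, (sameCycle_neg_left_iff hσ).mp h, neg_neg y⟩⟩
  rintro ⟨z, hz, rfl⟩
  exact (sameCycle_neg_iff hσ).mpr hz

/-- `t > 0` is the only element of least absolute value in its cycle; in particular `-t` is not
in that cycle, which is therefore positive. -/
def IsOrbitRep (σ : Perm ℤ) (t : ℤ) : Prop := 0 < t ∧ ∀ s, σ.SameCycle t s → s = t ∨ t < |s|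

lemma IsOrbitRep.le_abs {t x : ℤ} (ht : IsOrbitRep σ t) (h : σ.SameCycle t x) : t ≤ |x| := by
  rcases ht.2 x h with rfl | h
  · exact le_abs_self x
  · exact h.le

lemma IsOrbitRep.eq_of_sameCycle {t t' : ℤ} (ht : IsOrbitRep σ t) (ht' : IsOrbitRep σ t')
    (h : σ.SameCycle t t') : t = t' := by
  have h₁ := ht.2 t' h
  have h₂ := ht'.2 t h.symm
  rw [abs_of_pos ht'.1] at h₁
  rw [abs_of_pos ht.1] at h₂
  omega

lemma IsOrbitRep.not_sameCycle_neg (hσ : σ ∈ Bset n) {t t' : ℤ} (ht : IsOrbitRep σ t)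
    (ht' : IsOrbitRep σ t') : ¬σ.SameCycle t (-t') := by
  intro h
  have h₁ := ht.2 _ h
  have h₂ := ht'.2 (-t) (by rw [← sameCycle_neg_iff hσ, neg_neg]; exact h.symm)
  rw [abs_neg, abs_of_pos ht'.1] at h₁
  rw [abs_neg, abs_of_pos ht.1] at h₂
  have := ht.1
  have := ht'.1
  omega

lemma isOrbitRep_of_isLeast (hσ : σ ∈ Bset n) {x m : ℤ} (hx : ¬σ.SameCycle x (-x))
    (hxm : σ.SameCycle x m) (hm : 0 < m)
    (hleast : ∀ s, 0 < s → σ.SameCycle x s ∨ σ.SameCycle x (-s) → m ≤ s) :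
    IsOrbitRep σ m := by
  refine ⟨hm, fun s hs => ?_⟩
  have hxs := hxm.trans hs
  have hs0 : s ≠ 0 := by
    rintro rfl
    have := (hxs.eq_of_right (apply_zero_of_mem_Bset hσ)).symm
    subst this
    exact hx (by simpa using hxs)
  have hms : m ≤ |s| := hleast |s| (abs_pos.mpr hs0)
    (by rcases abs_choice s with h | h <;> rw [h] <;> simp [hxs])
  rcases hms.lt_or_eq with h | h
  · exact Or.inr h
  rcases abs_choice s with h' | h' <;> rw [h'] at h
  · exact Or.inl h.symm
  · refine absurd ?_ hx
    have hxm' : σ.SameCycle x (-m) := by rw [h, neg_neg]; exact hxs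
    exact hxm'.trans ((sameCycle_neg_iff hσ).mpr hxm).symm

lemma exists_isOrbitRep (hσ : σ ∈ Bset n) {x : ℤ} (hx0 : x ≠ 0) (hx : ¬σ.SameCycle x (-x)) :
    ∃ t, IsOrbitRep σ t ∧ (σ.SameCycle t x ∨ σ.SameCycle t (-x)) := by
  obtain ⟨m, ⟨hm, hxm⟩, hleast⟩ := Int.exists_least_of_bdd
    (P := fun z => 0 < z ∧ (σ.SameCycle x z ∨ σ.SameCycle x (-z)))
    ⟨0, fun z hz => hz.1.le⟩
    ⟨|x|, abs_pos.mpr hx0, by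
      rcases abs_choice x with h | h <;> rw [h] <;> simp [Perm.SameCycle.rfl]⟩
  have hleast' : ∀ s, 0 < s → σ.SameCycle x s ∨ σ.SameCycle x (-s) → m ≤ s :=
    fun s hs h => hleast s ⟨hs, h⟩
  rcases hxm with hxm | hxm
  · exact ⟨m, isOrbitRep_of_isLeast hσ hx hxm hm hleast', Or.inl hxm.symm⟩
  · have hxm' : σ.SameCycle (-x) m := by rwa [sameCycle_neg_left_iff hσ]
    refine ⟨m, isOrbitRep_of_isLeast hσ ?_ hxm' hm ?_, Or.inr hxm'.symm⟩
    · rwa [neg_neg, sameCycle_neg_left_iff hσ]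
    · intro s hs h
      rw [sameCycle_neg_left_iff hσ, sameCycle_neg_left_iff hσ, neg_neg] at h
      exact hleast' s hs h.symm

/-- The reflection representation of `B(n)`. -/
def oddVectors (n : ℕ) : Submodule ℚ (ℤ → ℚ) where
  carrier := {v | (∀ x, v (-x) = -v x) ∧ ∀ x, (n : ℤ) < |x| → v x = 0}
  add_mem' ha hb := ⟨fun x => by simp [ha.1 x, hb.1 x, add_comm],
    fun x hx => by simp [ha.2 x hx, hb.2 x hx]⟩
  zero_mem' := ⟨fun _ => by simp, fun _ _ => rfl⟩
  smul_mem' c _ ha := ⟨fun x => by simp [ha.1 x], fun x hx => by simp [ha.2 x hx]⟩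

instance : CoeFun (oddVectors n) (fun _ => ℤ → ℚ) := ⟨Subtype.val⟩

lemma oddVectors_apply_neg (v : oddVectors n) (x : ℤ) : v (-x) = -v x := v.2.1 x

lemma oddVectors_apply_of_lt_abs (v : oddVectors n) {x : ℤ} (hx : (n : ℤ) < |x|) :
    v x = 0 :=
  v.2.2 x hx

instance : FiniteDimensional ℚ (oddVectors n) := by
  refine Module.Finite.of_injective
    (LinearMap.funLeft ℚ ℚ (Subtype.val : Set.Icc (-(n : ℤ)) n → ℤ) ∘ₗ (oddVectors n).subtype)
    fun v w h => Subtype.ext (funext fun x => ?_)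
  by_cases hx : |x| ≤ n
  · exact congrFun h ⟨x, abs_le.mp hx⟩
  · rw [oddVectors_apply_of_lt_abs v (not_le.mp hx), oddVectors_apply_of_lt_abs w (not_le.mp hx)]

def fixedSubspace (n : ℕ) (σ : Perm ℤ) : Submodule ℚ (oddVectors n) where
  carrier := {v | ∀ x, v (σ x) = v x}
  add_mem' ha hb x := by simp [ha x, hb x]
  zero_mem' _ := rfl
  smul_mem' c _ ha x := by simp [ha x]

lemma mem_fixedSubspace {v : oddVectors n} : v ∈ fixedSubspace n σ ↔ ∀ x, v (σ x) = v x :=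
  Iff.rfl

lemma fixedSubspace_one : fixedSubspace n 1 = ⊤ :=
  eq_top_iff.mpr fun _ _ => mem_fixedSubspace.mpr fun _ => rfl

lemma fixedSubspace_inf_le_mul :
    fixedSubspace n σ ⊓ fixedSubspace n τ ≤ fixedSubspace n (σ * τ) :=
  fun _ hv => mem_fixedSubspace.mpr fun x => (hv.1 (τ x)).trans (hv.2 x)

lemma fixedSubspace_le_inv : fixedSubspace n σ ≤ fixedSubspace n σ⁻¹ :=
  fun v hv => mem_fixedSubspace.mpr fun x => by simpa using (hv (σ⁻¹ x)).symm

lemma apply_eq_of_mem_fixedSubspace {v : oddVectors n} (hv : v ∈ fixedSubspace n σ) {a b : ℤ}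
    (h : σ.SameCycle a b) : v a = v b := by
  obtain ⟨k, rfl⟩ := h
  induction k using Int.induction_on with
  | zero => rfl
  | succ k ih => rw [ih, add_comm, zpow_add, zpow_one, Perm.mul_apply, hv]
  | pred k ih =>
    rw [ih, sub_eq_add_neg, add_comm, zpow_add, zpow_neg_one, Perm.mul_apply]
    simpa using hv (σ⁻¹ ((σ ^ (-k : ℤ)) a))

/-- The abstract form of Carter's lower bound on reflection length. -/
theorem _root_.Submodule.finrank_le_finrank_prod_add_length {M R V : Type*} [Monoid M]
    [DivisionRing R] [AddCommGroup V] [Module R V] [FiniteDimensional R V] (F : M → Submodule R V)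
    (h_one : F 1 = ⊤) (h_mul : ∀ a b, F a ⊓ F b ≤ F (a * b)) (L : List M)
    (hL : ∀ a ∈ L, finrank R V ≤ finrank R (F a) + 1) :
    finrank R V ≤ finrank R (F L.prod) + L.length := by
  induction L with
  | nil => rw [List.prod_nil, h_one, finrank_top]; exact Nat.le_add_right _ _
  | cons a L ih =>
    have h_sup := Submodule.finrank_sup_add_finrank_inf_eq (F a) (F L.prod)
    have := (F a ⊔ F L.prod).finrank_le
    have := Submodule.finrank_mono (h_mul a L.prod)
    have := hL a List.mem_cons_self
    have := ih fun b hb => hL b (List.mem_cons_of_mem a hb)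
    rw [List.prod_cons, List.length_cons]
    omega

lemma _root_.LinearMap.finrank_le_finrank_ker_add_one {R V : Type*} [DivisionRing R]
    [AddCommGroup V] [Module R V] [FiniteDimensional R V] (φ : V →ₗ[R] R) :
    finrank R V ≤ finrank R (LinearMap.ker φ) + 1 := by
  have := LinearMap.finrank_range_add_finrank_ker φ
  have := (LinearMap.range φ).finrank_le
  rw [finrank_self] at this
  omega

lemma _root_.Equiv.apply_swap_apply_of_eq {α β : Type*} [DecidableEq α] {f : α → β} {a b : α}
    (h : f a = f b) (x : α) : f (swap a b x) = f x := by
  rw [swap_apply_def]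
  split_ifs <;> simp_all

lemma mem_fixedSubspace_swap_neg {v : oddVectors n} {i : ℤ} (h : v i = v (-i)) :
    v ∈ fixedSubspace n (swap i (-i)) :=
  mem_fixedSubspace.mpr (apply_swap_apply_of_eq h)

lemma mem_fixedSubspace_swap_mul_swap {v : oddVectors n} {i j : ℤ}
    (h : v i = v j) : v ∈ fixedSubspace n (swap i j * swap (-i) (-j)) := by
  have h' : v (-i) = v (-j) := by rw [oddVectors_apply_neg, oddVectors_apply_neg, h]
  exact mem_fixedSubspace.mpr fun x => by
    rw [Perm.mul_apply, apply_swap_apply_of_eq h, apply_swap_apply_of_eq h']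

lemma IsRefl.exists_mem_fixedSubspace_of_apply_eq {r : Perm ℤ} (hr : IsRefl n r) :
    ∃ i j : ℤ, ∀ v : oddVectors n, v i = v j → v ∈ fixedSubspace n r := by
  rcases hr with ⟨i, j, -, -, -, -, -, rfl⟩ | ⟨i, -, -, rfl⟩
  · exact ⟨i, j, fun _ => mem_fixedSubspace_swap_mul_swap⟩
  · exact ⟨i, -i, fun _ => mem_fixedSubspace_swap_neg⟩

lemma IsRefl.finrank_le {r : Perm ℤ} (hr : IsRefl n r) :
    finrank ℚ (oddVectors n) ≤ finrank ℚ (fixedSubspace n r) + 1 := by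
  obtain ⟨i, j, h⟩ := hr.exists_mem_fixedSubspace_of_apply_eq
  let φ := (LinearMap.proj (R := ℚ) (φ := fun _ : ℤ => ℚ) i - LinearMap.proj j) ∘ₗ
    (oddVectors n).subtype
  have hker : LinearMap.ker φ ≤ fixedSubspace n r := fun v hv =>
    h v (sub_eq_zero.mp hv)
  exact φ.finrank_le_finrank_ker_add_one.trans
    (Nat.add_le_add_right (Submodule.finrank_mono hker) 1)

lemma IsRefl.mem_Bset {r : Perm ℤ} (hr : IsRefl n r) : r ∈ Bset n := by
  rcases hr with ⟨i, j, hi, hj, hin, hjn, -, rfl⟩ | ⟨i, hi, hin, rfl⟩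
  · rw [abs_le] at hin hjn
    refine ⟨fun x => ?_, fun x hx => ?_⟩
    · simp only [Perm.mul_apply, swap_apply_def]
      split_ifs <;> omega
    · rw [lt_abs] at hx
      simp only [Perm.mul_apply, swap_apply_def]
      split_ifs <;> omega
  · refine ⟨fun x => ?_, fun x hx => ?_⟩
    · simp only [swap_apply_def]
      split_ifs <;> omega
    · rw [lt_abs] at hx
      simp only [swap_apply_def]
      split_ifs <;> omega

lemma IsRefl.inv_mul_mem_Bset {r : Perm ℤ} (hr : IsRefl n r) (hσ : σ ∈ Bset n) :
    r⁻¹ * σ ∈ Bset n :=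
  (hyperoctahedralGroup n).mul_mem ((hyperoctahedralGroup n).inv_mem hr.mem_Bset) hσ

lemma finrank_le_finrank_fixedSubspace_prod_add_length {L : List (Perm ℤ)}
    (hL : ∀ r ∈ L, IsRefl n r) :
    finrank ℚ (oddVectors n) ≤ finrank ℚ (fixedSubspace n L.prod) + L.length :=
  Submodule.finrank_le_finrank_prod_add_length (fixedSubspace n) fixedSubspace_one
    (fun _ _ => fixedSubspace_inf_le_mul) L fun r hr => (hL r hr).finrank_le

lemma exists_isRefl_apply_eq {i j : ℤ} (hi : i ∈ signedInterval n) (hj : j ∈ signedInterval n)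
    (hij : i ≠ j) :
    ∃ r, IsRefl n r ∧ r i = j ∧ ∀ v : oddVectors n, v i = v j → v ∈ fixedSubspace n r := by
  obtain ⟨hi, hin⟩ := mem_signedInterval.mp hi
  obtain ⟨hj, hjn⟩ := mem_signedInterval.mp hj
  by_cases hji : j = -i
  · subst hji
    rcases hi.lt_or_gt with hneg | hpos
    · refine ⟨swap (-i) (- -i), Or.inr ⟨-i, by omega, by rw [abs_le] at hin; omega, rfl⟩,
        by simp, fun v hv => mem_fixedSubspace_swap_neg ?_⟩
      rw [neg_neg, hv]
    · exact ⟨swap i (-i), Or.inr ⟨i, hpos, by rw [abs_le] at hin; omega, rfl⟩,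
        swap_apply_left _ _, fun v => mem_fixedSubspace_swap_neg⟩
  · have habs : |i| ≠ |j| := fun h => by rcases abs_eq_abs.mp h with h | h <;> omega
    refine ⟨swap i j * swap (-i) (-j), Or.inl ⟨i, j, hi, hj, hin, hjn, habs, rfl⟩, ?_,
      fun v => mem_fixedSubspace_swap_mul_swap⟩
    rw [Perm.mul_apply, swap_apply_of_ne_of_ne (a := -i) (b := -j) (by omega) (by omega),
      swap_apply_left]

lemma mem_fixedSubspace_of_apply_eq_self (hτ : τ ∈ Bset n) {x : ℤ} (hx : τ x = x)
    {v : oddVectors n} (hv : ∀ y, y ≠ x → y ≠ -x → v y = 0) : v ∈ fixedSubspace n τ := by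
  have hx' : τ (-x) = -x := by rw [hτ.1, hx]
  refine mem_fixedSubspace.mpr fun y => ?_
  by_cases h₁ : y = x
  · rw [h₁, hx]
  by_cases h₂ : y = -x
  · rw [h₂, hx']
  rw [hv y h₁ h₂, hv]
  · exact fun h => h₁ (τ.injective (h.trans hx.symm))
  · exact fun h => h₂ (τ.injective (h.trans hx'.symm))

lemma exists_isRefl_fixedSubspace_lt (hσ : σ ∈ Bset n) (h1 : σ ≠ 1) :
    ∃ r, IsRefl n r ∧ fixedSubspace n σ < fixedSubspace n (r⁻¹ * σ) := by
  obtain ⟨x, hx⟩ : ∃ x, σ x ≠ x := not_forall.mp fun h => h1 (Perm.ext h)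
  have hxI := mem_signedInterval_of_apply_ne hσ hx
  have hσx : σ (σ x) ≠ σ x := fun h => hx (σ.injective h)
  obtain ⟨r, hr, hrx, hrK⟩ :=
    exists_isRefl_apply_eq hxI (mem_signedInterval_of_apply_ne hσ hσx) hx.symm
  have hτx : (r⁻¹ * σ) x = x := by rw [Perm.mul_apply, Perm.inv_eq_iff_eq, hrx]
  have hle : fixedSubspace n σ ≤ fixedSubspace n (r⁻¹ * σ) := fun v hv =>
    fixedSubspace_inf_le_mul ⟨fixedSubspace_le_inv (hrK v (hv x).symm), hv⟩
  obtain ⟨hx0, hxn⟩ := mem_signedInterval.mp hxI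
  let b : oddVectors n := ⟨fun y => if y = x then 1 else if y = -x then -1 else 0,
    fun y => by beta_reduce; split_ifs <;> first | omega | norm_num,
    fun y hy => by
      rw [abs_le] at hxn
      rw [lt_abs] at hy
      beta_reduce
      split_ifs <;> first | omega | rfl⟩
  have hb : b ∈ fixedSubspace n (r⁻¹ * σ) :=
    mem_fixedSubspace_of_apply_eq_self (hr.inv_mul_mem_Bset hσ) hτx fun y h₁ h₂ => by
      simp [b, h₁, h₂]
  have hb' : b ∉ fixedSubspace n σ := fun h => by
    have := h x
    simp only [b, if_neg hx] at this
    split_ifs at this <;> norm_num at this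
  exact ⟨r, hr, lt_of_le_of_ne hle fun h => hb' (h ▸ hb)⟩

lemma exists_isRefl_prod_eq (hσ : σ ∈ Bset n) :
    ∃ L : List (Perm ℤ), (∀ r ∈ L, IsRefl n r) ∧ L.prod = σ ∧
      L.length + finrank ℚ (fixedSubspace n σ) ≤ finrank ℚ (oddVectors n) := by
  induction hk : finrank ℚ (oddVectors n) - finrank ℚ (fixedSubspace n σ)
    using Nat.strong_induction_on generalizing σ with
  | _ k ih =>
  have hK := (fixedSubspace n σ).finrank_le
  by_cases h1 : σ = 1
  · exact ⟨[], by simp, h1.symm, by simpa using hK⟩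
  obtain ⟨r, hr, hlt⟩ := exists_isRefl_fixedSubspace_lt hσ h1
  have hlt := Submodule.finrank_lt_finrank_of_lt hlt
  obtain ⟨L, hL, hprod, hlen⟩ := ih _ (by have := (fixedSubspace n (r⁻¹ * σ)).finrank_le; omega)
    (hr.inv_mul_mem_Bset hσ) rfl
  refine ⟨r :: L, ?_, by rw [List.prod_cons, hprod, mul_inv_cancel_left], ?_⟩
  · exact List.forall_mem_cons.mpr ⟨hr, hL⟩
  · rw [List.length_cons]; omega

open Classical in
/-- One representative in `[1, n]` of each mirror pair of positive cycles (fixed points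
included). -/
def orbitReps (n : ℕ) (σ : Perm ℤ) : Finset ℤ := {t ∈ Finset.Icc 1 (n : ℤ) | IsOrbitRep σ t}

lemma mem_orbitReps {t : ℤ} : t ∈ orbitReps n σ ↔ IsOrbitRep σ t ∧ t ≤ n := by
  classical
  simp only [orbitReps, Finset.mem_filter, Finset.mem_Icc]
  exact ⟨fun h => ⟨h.2, h.1.2⟩, fun h => ⟨⟨h.1.1, h.2⟩, h.1⟩⟩

lemma exists_mem_orbitReps (hσ : σ ∈ Bset n) {x : ℤ} (hxI : x ∈ signedInterval n)
    (hx : ¬σ.SameCycle x (-x)) :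
    ∃ t ∈ orbitReps n σ, σ.SameCycle t x ∨ σ.SameCycle t (-x) := by
  obtain ⟨hx0, hxn⟩ := mem_signedInterval.mp hxI
  obtain ⟨t, ht, htx⟩ := exists_isOrbitRep hσ hx0 hx
  have : t ≤ |x| := by
    rcases htx with h | h
    · exact ht.le_abs h
    · simpa using ht.le_abs h
  exact ⟨t, mem_orbitReps.mpr ⟨ht, this.trans hxn⟩, htx⟩

lemma eq_zero_of_apply_orbitReps (hσ : σ ∈ Bset n) {v : oddVectors n}
    (hv : v ∈ fixedSubspace n σ) (hT : ∀ t ∈ orbitReps n σ, v t = 0) : v = 0 := by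
  refine Subtype.ext (funext fun x => ?_)
  show v x = 0
  have hodd := oddVectors_apply_neg v x
  by_cases hx0 : x = 0
  · subst hx0
    simp only [neg_zero] at hodd
    linarith
  by_cases hxn : |x| ≤ n
  swap
  · exact oddVectors_apply_of_lt_abs v (not_le.mp hxn)
  by_cases hx : σ.SameCycle x (-x)
  · have := apply_eq_of_mem_fixedSubspace hv hx
    linarith
  obtain ⟨t, ht, htx | htx⟩ := exists_mem_orbitReps hσ (mem_signedInterval.mpr ⟨hx0, hxn⟩) hx
  · rw [← apply_eq_of_mem_fixedSubspace hv htx, hT t ht]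
  · rw [← apply_eq_of_mem_fixedSubspace hv htx, hT t ht] at hodd
    linarith

open Classical in
def orbitVector (σ : Perm ℤ) (t x : ℤ) : ℚ :=
  if σ.SameCycle t x then 1 else if σ.SameCycle t (-x) then -1 else 0

lemma orbitVector_mem (hσ : σ ∈ Bset n) {t : ℤ} (ht : t ∈ orbitReps n σ) :
    orbitVector σ t ∈ oddVectors n := by
  obtain ⟨ht, htn⟩ := mem_orbitReps.mp ht
  have hexcl : ∀ x, σ.SameCycle t x → ¬σ.SameCycle t (-x) := fun x h h' =>
    ht.not_sameCycle_neg hσ ht (h'.trans ((sameCycle_neg_iff hσ).mpr h).symm)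
  refine ⟨fun x => ?_, fun x hx => ?_⟩
  · by_cases h : σ.SameCycle t x
    · simp [orbitVector, h, hexcl x h]
    · by_cases h' : σ.SameCycle t (-x) <;> simp [orbitVector, h, h']
  · have hfar : ∀ y, (n : ℤ) < |y| → ¬σ.SameCycle t y := fun y hy h => by
      obtain rfl := h.eq_of_right (hσ.2 y hy)
      rw [abs_of_pos ht.1] at hy
      omega
    simp [orbitVector, hfar x hx, hfar (-x) (by rwa [abs_neg])]

lemma orbitVector_mem_fixedSubspace (hσ : σ ∈ Bset n) {t : ℤ} (ht : t ∈ orbitReps n σ) :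
    ⟨orbitVector σ t, orbitVector_mem hσ ht⟩ ∈ fixedSubspace n σ := by
  refine mem_fixedSubspace.mpr fun x => ?_
  show orbitVector σ t (σ x) = orbitVector σ t x
  rw [orbitVector, orbitVector, ← hσ.1, Perm.sameCycle_apply_right, Perm.sameCycle_apply_right]

lemma orbitVector_apply_orbitReps (hσ : σ ∈ Bset n) {t t' : ℤ} (ht : t ∈ orbitReps n σ)
    (ht' : t' ∈ orbitReps n σ) : orbitVector σ t t' = if t = t' then 1 else 0 := by
  have ht := (mem_orbitReps.mp ht).1
  have ht' := (mem_orbitReps.mp ht').1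
  by_cases h : t = t'
  · subst h
    simp [orbitVector, Perm.SameCycle.refl]
  · have : ¬σ.SameCycle t t' := fun h' => h (ht.eq_of_sameCycle ht' h')
    simp [orbitVector, h, this, ht.not_sameCycle_neg hσ ht']

lemma finrank_fixedSubspace (hσ : σ ∈ Bset n) :
    finrank ℚ (fixedSubspace n σ) = (orbitReps n σ).card := by
  let res : fixedSubspace n σ →ₗ[ℚ] (orbitReps n σ → ℚ) :=
    LinearMap.funLeft ℚ ℚ Subtype.val ∘ₗ (oddVectors n).subtype ∘ₗ (fixedSubspace n σ).subtype
  have hres : Function.Injective res := by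
    intro v w h
    have := eq_zero_of_apply_orbitReps hσ (v - w).2 fun t ht => by
      simpa [res, sub_eq_zero] using congrFun h ⟨t, ht⟩
    simpa [sub_eq_zero] using this
  have : FiniteDimensional ℚ (fixedSubspace n σ) := Module.Finite.of_injective res hres
  let u : orbitReps n σ → fixedSubspace n σ := fun t =>
    ⟨⟨orbitVector σ t, orbitVector_mem hσ t.2⟩, orbitVector_mem_fixedSubspace hσ t.2⟩
  have hres_u : res ∘ u = Pi.basisFun ℚ (orbitReps n σ) := by
    funext t t'
    simp only [res, u, Function.comp_apply, LinearMap.comp_apply, LinearMap.funLeft_apply,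
      Submodule.subtype_apply, Pi.basisFun_apply, orbitVector_apply_orbitReps hσ t.2 t'.2,
      Pi.single_apply, ← Subtype.ext_iff, eq_comm]
  have hu : LinearIndependent ℚ u :=
    LinearIndependent.of_comp res (hres_u ▸ (Pi.basisFun ℚ _).linearIndependent)
  refine le_antisymm ?_ ?_
  · simpa using LinearMap.finrank_le_finrank_of_injective hres
  · simpa using hu.fintype_card_le_finrank

lemma finrank_oddVectors : finrank ℚ (oddVectors n) = n := by
  have h := finrank_fixedSubspace (hyperoctahedralGroup n).one_mem
  rw [fixedSubspace_one, finrank_top] at h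
  have : orbitReps n 1 = Finset.Icc 1 (n : ℤ) := by
    ext t
    simp only [mem_orbitReps, IsOrbitRep, Perm.sameCycle_one, Finset.mem_Icc]
    constructor
    · rintro ⟨⟨ht, -⟩, htn⟩; exact ⟨ht, htn⟩
    · rintro ⟨ht, htn⟩; exact ⟨⟨ht, fun s hs => Or.inl hs.symm⟩, htn⟩
  rw [h, this, Int.card_Icc]
  omega

lemma _root_.Finset.even_sum_of_involution {ι : Type*} {s : Finset ι} {f : ι → ℕ} (g : ι → ι)
    (hg_mem : ∀ a ∈ s, g a ∈ s) (hg_invol : ∀ a ∈ s, g (g a) = a) (hg_ne : ∀ a ∈ s, g a ≠ a)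
    (hf : ∀ a ∈ s, f (g a) = f a) : Even (∑ a ∈ s, f a) := by
  rw [← ZMod.natCast_eq_zero_iff_even, Nat.cast_sum]
  exact Finset.sum_involution (fun a _ => g a)
    (fun a ha => by rw [hf a ha, CharTwo.add_self_eq_zero]) (fun a ha _ => hg_ne a ha) hg_mem
    hg_invol

lemma card_signedInterval : (signedInterval n).card = 2 * n := by
  rw [signedInterval, Finset.card_erase_of_mem (by simp), Int.card_Icc]
  omega

lemma orbitOf_subset_signedInterval (hσ : σ ∈ Bset n) {x : ℤ} (hx : x ∈ signedInterval n) :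
    orbitOf σ x ⊆ signedInterval n := fun y hxy => by
  by_cases hy : σ y = y
  · rwa [← hxy.eq_of_right hy]
  · exact mem_signedInterval_of_apply_ne hσ hy

lemma orbitOf_eq_singleton {x : ℤ} (hx : σ x = x) : orbitOf σ x = {x} :=
  Set.ext fun _ => ⟨fun h => (h.eq_of_left hx).symm, fun h => h ▸ Perm.SameCycle.refl σ x⟩

lemma orbitOf_mem_ntOrbits_iff {x : ℤ} : orbitOf σ x ∈ ntOrbits σ ↔ σ x ≠ x := by
  refine ⟨fun ⟨i, hi, h⟩ => ?_, fun hx => ⟨x, hx, rfl⟩⟩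
  have : σ.SameCycle i x := orbitOf_eq_iff.mp h.symm
  exact fun hx => hi ((this.apply_eq_self_iff).mpr hx)

lemma negSet_orbitOf_ne_of_apply_eq (hσ : σ ∈ Bset n) {x : ℤ} (hx0 : x ≠ 0) (hx : σ x = x) :
    negSet (orbitOf σ x) ≠ orbitOf σ x := by
  rw [negSet_orbitOf hσ, Ne, orbitOf_eq_iff]
  intro h
  have := h.eq_of_right hx
  omega

open Classical in
/-- The cycles of `σ` on `[±n]`, fixed points included. -/
def cycles (n : ℕ) (σ : Perm ℤ) : Finset (Set ℤ) := (signedInterval n).image (orbitOf σ)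

lemma sum_ncard_cycles (hσ : σ ∈ Bset n) : ∑ O ∈ cycles n σ, O.ncard = 2 * n := by
  classical
  rw [← card_signedInterval, Finset.card_eq_sum_card_image (orbitOf σ), cycles]
  refine Finset.sum_congr rfl fun O hO => ?_
  obtain ⟨x, hx, rfl⟩ := Finset.mem_image.mp hO
  rw [← Set.ncard_coe_finset]
  congr 1
  ext y
  simp only [Finset.coe_filter, Set.mem_ofPred_eq, orbitOf_eq_iff]
  exact ⟨fun h => ⟨orbitOf_subset_signedInterval hσ hx h, h.symm⟩, fun h => h.2.symm⟩

lemma negSet_negSet (B : Set ℤ) : negSet (negSet B) = B := by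
  simp [negSet]

lemma ncard_negSet (B : Set ℤ) : (negSet B).ncard = B.ncard :=
  B.ncard_image_of_injective neg_injective

lemma one_le_ncard_of_mem_cycles (hσ : σ ∈ Bset n) {O : Set ℤ} (hO : O ∈ cycles n σ) :
    1 ≤ O.ncard := by
  classical
  obtain ⟨x, hx, rfl⟩ := Finset.mem_image.mp hO
  exact (Set.ncard_pos ((signedInterval n).finite_toSet.subset
    (orbitOf_subset_signedInterval hσ hx))).mpr ⟨x, Perm.SameCycle.refl σ x⟩

lemma even_ncard_of_negSet_eq (hσ : σ ∈ Bset n) {O : Set ℤ} (hO : O ∈ cycles n σ)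
    (hneg : negSet O = O) : Even O.ncard := by
  classical
  obtain ⟨x, hx, rfl⟩ := Finset.mem_image.mp hO
  have hsub := orbitOf_subset_signedInterval hσ hx
  have hO : ((signedInterval n).filter (· ∈ orbitOf σ x) : Set ℤ) = orbitOf σ x := by
    rw [Finset.coe_filter]
    exact Set.sep_eq_of_subset hsub
  rw [← hO, Set.ncard_coe_finset, Finset.card_eq_sum_ones]
  refine Finset.even_sum_of_involution Neg.neg (fun a ha => ?_) (fun a _ => neg_neg a)
    (fun a ha => ?_) fun _ _ => rfl
  · rw [Finset.mem_filter] at ha ⊢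
    refine ⟨neg_mem_signedInterval ha.1, ?_⟩
    rw [← hneg]
    exact ⟨a, ha.2, rfl⟩
  · have := (mem_signedInterval.mp (Finset.mem_filter.mp ha).1).1
    omega

open Classical in
def posCycles (n : ℕ) (σ : Perm ℤ) : Finset (Set ℤ) := {O ∈ cycles n σ | negSet O ≠ O}

open Classical in
def negCycles (n : ℕ) (σ : Perm ℤ) : Finset (Set ℤ) := {O ∈ cycles n σ | negSet O = O}

lemma mem_posCycles {O : Set ℤ} : O ∈ posCycles n σ ↔ O ∈ cycles n σ ∧ negSet O ≠ O := by
  classical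
  rw [posCycles, Finset.mem_filter]

lemma mem_negCycles {O : Set ℤ} : O ∈ negCycles n σ ↔ O ∈ cycles n σ ∧ negSet O = O := by
  classical
  rw [negCycles, Finset.mem_filter]

lemma sum_posCycles_add_sum_negCycles (f : Set ℤ → ℕ) :
    ∑ O ∈ posCycles n σ, f O + ∑ O ∈ negCycles n σ, f O = ∑ O ∈ cycles n σ, f O := by
  classical
  rw [← Finset.sum_filter_not_add_sum_filter (cycles n σ) (fun O => negSet O = O) f]
  rfl

lemma negOrbits_eq (hσ : σ ∈ Bset n) : negOrbits σ = negCycles n σ := by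
  classical
  ext O
  simp only [negOrbits, Finset.mem_coe, mem_negCycles, cycles, Finset.mem_image,
    Set.mem_ofPred_eq]
  constructor
  · rintro ⟨⟨i, hi, rfl⟩, hneg⟩
    exact ⟨⟨i, mem_signedInterval_of_apply_ne hσ hi, rfl⟩, hneg⟩
  · rintro ⟨⟨x, hx, rfl⟩, hneg⟩
    exact ⟨orbitOf_mem_ntOrbits_iff.mpr fun hfix =>
      negSet_orbitOf_ne_of_apply_eq hσ (mem_signedInterval.mp hx).1 hfix hneg, hneg⟩

lemma finsum_posOrbits (hσ : σ ∈ Bset n) :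
    ∑ᶠ O ∈ posOrbits σ, (O.ncard - 1) = ∑ O ∈ posCycles n σ, (O.ncard - 1) := by
  classical
  apply finsum_mem_eq_sum_of_inter_support_eq
  ext O
  simp only [posOrbits, Finset.mem_coe, mem_posCycles, cycles, Finset.mem_image,
    Set.mem_inter_iff, Set.mem_ofPred_eq, Function.mem_support]
  constructor
  · rintro ⟨⟨⟨i, hi, rfl⟩, hpos⟩, hcard⟩
    exact ⟨⟨⟨i, mem_signedInterval_of_apply_ne hσ hi, rfl⟩, hpos⟩, hcard⟩
  · rintro ⟨⟨⟨x, hx, rfl⟩, hpos⟩, hcard⟩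
    refine ⟨⟨orbitOf_mem_ntOrbits_iff.mpr fun hfix => hcard ?_, hpos⟩, hcard⟩
    rw [orbitOf_eq_singleton hfix, Set.ncard_singleton, Nat.sub_self]

lemma even_sum_posCycles (hσ : σ ∈ Bset n) : Even (∑ O ∈ posCycles n σ, (O.ncard - 1)) := by
  classical
  refine Finset.even_sum_of_involution negSet (fun O hO => ?_) (fun O _ => negSet_negSet O)
    (fun O hO => (mem_posCycles.mp hO).2) fun O _ => by rw [ncard_negSet]
  obtain ⟨hO, hpos⟩ := mem_posCycles.mp hO
  obtain ⟨x, hx, rfl⟩ := Finset.mem_image.mp hO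
  refine mem_posCycles.mpr ⟨Finset.mem_image.mpr ⟨-x, neg_mem_signedInterval hx, ?_⟩, ?_⟩
  · exact (negSet_orbitOf hσ x).symm
  · rw [negSet_negSet]
    exact fun h => hpos h.symm

lemma card_posCycles (hσ : σ ∈ Bset n) : (posCycles n σ).card = 2 * (orbitReps n σ).card := by
  classical
  have hrep : ∀ t ∈ orbitReps n σ, t ∈ signedInterval n ∧ ¬σ.SameCycle t (-t) := fun t ht => by
    obtain ⟨ht, htn⟩ := mem_orbitReps.mp ht
    exact ⟨mem_signedInterval.mpr ⟨ht.1.ne', by rw [abs_of_pos ht.1]; exact htn⟩,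
      ht.not_sameCycle_neg hσ ht⟩
  have hsplit : posCycles n σ =
      (orbitReps n σ).image (orbitOf σ) ∪ (orbitReps n σ).image (fun t => orbitOf σ (-t)) := by
    ext O
    simp only [mem_posCycles, cycles, Finset.mem_image, Finset.mem_union]
    constructor
    · rintro ⟨⟨x, hx, rfl⟩, hpos⟩
      have hx' : ¬σ.SameCycle x (-x) := fun h =>
        hpos (by rw [negSet_orbitOf hσ]; exact orbitOf_eq_iff.mpr h.symm)
      obtain ⟨t, ht, htx | htx⟩ := exists_mem_orbitReps hσ hx hx'
      · exact Or.inl ⟨t, ht, orbitOf_eq_iff.mpr htx⟩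
      · exact Or.inr ⟨t, ht, orbitOf_eq_iff.mpr ((sameCycle_neg_left_iff hσ).mpr htx)⟩
    · rintro (⟨t, ht, rfl⟩ | ⟨t, ht, rfl⟩) <;> obtain ⟨htI, htt⟩ := hrep t ht
      · refine ⟨⟨t, htI, rfl⟩, ?_⟩
        rw [negSet_orbitOf hσ, Ne, orbitOf_eq_iff]
        exact fun h => htt h.symm
      · refine ⟨⟨-t, neg_mem_signedInterval htI, rfl⟩, ?_⟩
        rw [negSet_orbitOf hσ, neg_neg, Ne, orbitOf_eq_iff]
        exact htt
  have hdisj : Disjoint ((orbitReps n σ).image (orbitOf σ))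
      ((orbitReps n σ).image fun t => orbitOf σ (-t)) := by
    simp only [Finset.disjoint_left, Finset.mem_image]
    rintro O ⟨t, ht, rfl⟩ ⟨t', ht', h⟩
    exact (mem_orbitReps.mp ht).1.not_sameCycle_neg hσ (mem_orbitReps.mp ht').1
      (orbitOf_eq_iff.mp h.symm)
  have hinj : Set.InjOn (orbitOf σ) (orbitReps n σ) := fun t ht t' ht' h =>
    (mem_orbitReps.mp ht).1.eq_of_sameCycle (mem_orbitReps.mp ht').1 (orbitOf_eq_iff.mp h)
  have hinj' : Set.InjOn (fun t => orbitOf σ (-t)) (orbitReps n σ) := fun t ht t' ht' h =>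
    (mem_orbitReps.mp ht).1.eq_of_sameCycle (mem_orbitReps.mp ht').1
      ((sameCycle_neg_iff hσ).mp (orbitOf_eq_iff.mp h))
  rw [hsplit, Finset.card_union_of_disjoint hdisj, Finset.card_image_of_injOn hinj,
    Finset.card_image_of_injOn hinj', two_mul]

theorem card_orbitReps_add_normPlus_add_sizeMinus (hσ : σ ∈ Bset n) :
    (orbitReps n σ).card + (normPlus σ + sizeMinus σ) = n := by
  have htotal := sum_ncard_cycles hσ
  rw [← sum_posCycles_add_sum_negCycles] at htotal
  have hpos : ∑ O ∈ posCycles n σ, O.ncard =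
      ∑ O ∈ posCycles n σ, (O.ncard - 1) + (posCycles n σ).card := by
    rw [Finset.card_eq_sum_ones, ← Finset.sum_add_distrib]
    refine Finset.sum_congr rfl fun O hO => ?_
    have := one_le_ncard_of_mem_cycles hσ (mem_posCycles.mp hO).1
    omega
  have hnormPlus : 2 * normPlus σ = ∑ O ∈ posCycles n σ, (O.ncard - 1) := by
    obtain ⟨k, hk⟩ := even_sum_posCycles hσ
    rw [normPlus, finsum_posOrbits hσ, hk]
    omega
  have hsizeMinus : 2 * sizeMinus σ = ∑ O ∈ negCycles n σ, O.ncard := by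
    rw [sizeMinus, negOrbits_eq hσ, finsum_mem_coe_finset, Finset.mul_sum]
    refine Finset.sum_congr rfl fun O hO => ?_
    obtain ⟨hO, hneg⟩ := mem_negCycles.mp hO
    exact Nat.two_mul_div_two_of_even (even_ncard_of_negSet_eq hσ hO hneg)
  have hcard := card_posCycles hσ
  omega

/-- the reflection length of σ ∈ B(n), i.e. the least k such that σ is a
product of k reflections of B(n), equals ‖ρ⁺‖ + |ρ⁻|. -/
theorem reflection_length_eq (n : ℕ) (σ : Equiv.Perm ℤ) (hσ : σ ∈ Bset n) :
    IsLeast {k : ℕ | ∃ r : Fin k → Equiv.Perm ℤ,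
        (∀ t, IsRefl n (r t)) ∧ (List.ofFn r).prod = σ}
      (normPlus σ + sizeMinus σ) := by
  have hcodim : finrank ℚ (fixedSubspace n σ) + (normPlus σ + sizeMinus σ) =
      finrank ℚ (oddVectors n) := by
    rw [finrank_fixedSubspace hσ, finrank_oddVectors]
    exact card_orbitReps_add_normPlus_add_sizeMinus hσ
  have hlower : ∀ L : List (Perm ℤ), (∀ r ∈ L, IsRefl n r) → L.prod = σ →
      normPlus σ + sizeMinus σ ≤ L.length := fun L hL hprod => by
    have := finrank_le_finrank_fixedSubspace_prod_add_length hL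
    rw [hprod] at this
    omega
  refine ⟨?_, fun k ⟨r, hr, hprod⟩ => ?_⟩
  · obtain ⟨L, hL, hprod, hlen⟩ := exists_isRefl_prod_eq hσ
    have hL_len : L.length = normPlus σ + sizeMinus σ :=
      le_antisymm (by omega) (hlower L hL hprod)
    exact hL_len ▸ ⟨L.get, fun t => hL _ (List.get_mem L t), by rw [List.ofFn_get, hprod]⟩
  · simpa using hlower (List.ofFn r) (by simpa [List.mem_ofFn] using hr) hprod

end TypeB
end
end

section
/- Let q₊,q₋ ∈ ℂ. The following are equivalent: (i) the signed reflection function φ_{q₊,q₋} is positive definite on B(∞); (ii) φ_{q₊,q₋} is a character of B(∞); (iii) φ_{q₊,q₋} is an extreme character of B(∞). -/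
/-!
Conjugation by an element of B(∞) maps cycles to cycles and commutes with negation, so it
preserves the cycle type (ρ⁺, ρ⁻); hence φ is automatically central with φ(e) = 1, and (i) ⇔ (ii).

For (ii) ⇒ (iii), note that φ is multiplicative on elements with disjoint supports. Given
σ ∈ B(∞), permuting blocks of N consecutive absolute values produces pairwise disjoint conjugates
σ₀, σ₁, … of σ whose quotients σⱼ⁻¹σᵢ (i ≠ j) are all conjugate to e = σ₁⁻¹σ₀. Positive
definiteness of a character ψ, tested on (1, σ₀, …, σₙ₋₁) with weights (−nψ(σ), 1, …, 1), gives
n(1 − Re ψ(e)) + n²(Re ψ(e) − |ψ(σ)|²) ≥ 0, so |ψ(σ)|² ≤ Re ψ(e). For ψ = φ this is an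
equality, since φ(e) = φ(σ)² and φ(σ) is real. If φ = tψ₁ + sψ₂, strict convexity of |·|² then
forces ψ₁(σ) = ψ₂(σ).
-/

open scoped ComplexOrder

noncomputable section

namespace TypeB

/-- `‖ρ⁺‖ + ‖ρ⁻‖`; the sum over positive cycles counts each mirror pair `{c, c̄}` twice. -/
def expPlus (σ : Equiv.Perm ℤ) : ℕ :=
  (∑ᶠ O ∈ posOrbits σ, (O.ncard - 1)) / 2 + ∑ᶠ O ∈ negOrbits σ, (O.ncard / 2 - 1)

/-- `ℓ(ρ⁻)`. -/
def negCount (σ : Equiv.Perm ℤ) : ℕ := (negOrbits σ).ncard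

def phi (qp qm : ℂ) (σ : Equiv.Perm ℤ) : ℂ := qp ^ expPlus σ * qm ^ negCount σ

/-- B(∞), as the finitary permutations of ℤ commuting with negation (they all fix 0). -/
def BInfSet : Set (Equiv.Perm ℤ) :=
  {σ | (∀ i : ℤ, σ (-i) = -σ i) ∧ {i : ℤ | σ i ≠ i}.Finite}

def IsPosDefOn {G : Type*} [Group G] (S : Set G) (f : G → ℂ) : Prop :=
  ∀ (k : ℕ) (g : Fin k → G), (∀ i, g i ∈ S) → ∀ z : Fin k → ℂ,
    0 ≤ ∑ i : Fin k, ∑ j : Fin k, z i * (starRingEnd ℂ) (z j) * f ((g j)⁻¹ * g i)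

/-- Characters of B(∞), extended by zero to `Perm ℤ`; this embeds the convex set of characters
affinely in `Perm ℤ → ℂ`, so its extreme points are the extreme characters. -/
def CharSetB : Set (Equiv.Perm ℤ → ℂ) :=
  {f | (∀ σ, σ ∉ BInfSet → f σ = 0) ∧
       (∀ g ∈ BInfSet, ∀ h ∈ BInfSet, f (h * g * h⁻¹) = f g) ∧
       IsPosDefOn BInfSet f ∧ f 1 = 1}

open Classical in
def phiB (qp qm : ℂ) : Equiv.Perm ℤ → ℂ :=
  fun σ => if σ ∈ BInfSet then phi qp qm σ else 0

open Equiv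

lemma one_mem_BInfSet : (1 : Perm ℤ) ∈ BInfSet := ⟨fun _ => rfl, by simp⟩

lemma mul_mem_BInfSet {σ τ : Perm ℤ} (hσ : σ ∈ BInfSet) (hτ : τ ∈ BInfSet) :
    σ * τ ∈ BInfSet := by
  refine ⟨fun i => by simp [hτ.1 i, hσ.1 (τ i)], (hσ.2.union hτ.2).subset fun x hx => ?_⟩
  by_contra h
  simp_all

lemma inv_mem_BInfSet {σ : Perm ℤ} (hσ : σ ∈ BInfSet) : σ⁻¹ ∈ BInfSet := by
  refine ⟨fun i => ?_, hσ.2.subset fun x hx => ?_⟩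
  · rw [Perm.inv_eq_iff_eq, hσ.1]
    simp
  · exact fun h => hx (Perm.inv_eq_iff_eq.mpr h.symm)

lemma apply_zero_of_mem_BInfSet {σ : Perm ℤ} (hσ : σ ∈ BInfSet) : σ 0 = 0 := by
  have := hσ.1 0
  rw [neg_zero] at this
  omega

section Orbits

variable {X : Type*}

lemma setOf_conj_apply_ne (h g : Perm X) :
    {x | (h * g * h⁻¹) x ≠ x} = h '' {x | g x ≠ x} := by
  ext x
  simp [Set.mem_image_equiv, Perm.mul_apply, ← Perm.eq_inv_iff_eq (f := h)]

lemma ntOrbits_inv (σ : Perm X) : ntOrbits σ⁻¹ = ntOrbits σ := by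
  have hfix (x : X) : σ⁻¹ x = x ↔ σ x = x := by rw [Perm.inv_eq_iff_eq, eq_comm]
  simp only [ntOrbits, Perm.sameCycle_inv, ne_eq, hfix]

lemma ntOrbits_conj (h σ : Perm X) : ntOrbits (h * σ * h⁻¹) = Set.image h '' ntOrbits σ := by
  have horbit (x : X) : {y | (h * σ * h⁻¹).SameCycle (h x) y} = h '' {y | σ.SameCycle x y} := by
    ext y
    simp [Perm.sameCycle_conj, Set.mem_image_equiv]
  ext O
  constructor
  · rintro ⟨x, hx, rfl⟩
    refine ⟨_, ⟨h⁻¹ x, fun hc => hx ?_, rfl⟩, ?_⟩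
    · rw [Perm.mul_apply, Perm.mul_apply, hc]
      simp
    · simpa using (horbit (h⁻¹ x)).symm
  · rintro ⟨_, ⟨x, hx, rfl⟩, rfl⟩
    exact ⟨h x, by simpa [Perm.mul_apply] using hx, (horbit x).symm⟩

lemma subset_of_mem_ntOrbits {σ : Perm X} {O : Set X} (hO : O ∈ ntOrbits σ) :
    O ⊆ {x | σ x ≠ x} := by
  obtain ⟨x, hx, rfl⟩ := hO
  exact fun y hy => mt hy.apply_eq_self_iff.mpr hx

lemma ntOrbits_finite {σ : Perm X} (h : {x | σ x ≠ x}.Finite) : (ntOrbits σ).Finite :=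
  (h.image fun x => {y | σ.SameCycle x y}).subset fun _ ⟨x, hx, hO⟩ => ⟨x, hx, hO.symm⟩

lemma sameCycle_mul_iff_of_disjoint {σ τ : Perm X} (hd : σ.Disjoint τ) {x y : X}
    (hx : σ x ≠ x) : (σ * τ).SameCycle x y ↔ σ.SameCycle x y := by
  have hpow (n : ℤ) : ((σ * τ) ^ n) x = (σ ^ n) x := by
    rw [hd.commute.mul_zpow, Perm.mul_apply,
      Perm.zpow_apply_eq_self_of_apply_eq_self ((hd x).resolve_left hx)]
  simp only [Perm.SameCycle, hpow]

lemma ntOrbits_mul_of_disjoint {σ τ : Perm X} (hd : σ.Disjoint τ) :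
    ntOrbits (σ * τ) = ntOrbits σ ∪ ntOrbits τ := by
  have hsub {σ τ : Perm X} (hd : σ.Disjoint τ) : ntOrbits σ ⊆ ntOrbits (σ * τ) := by
    rintro _ ⟨x, hx, rfl⟩
    refine ⟨x, ?_, Set.ext fun y => (sameCycle_mul_iff_of_disjoint hd hx).symm⟩
    simpa [Perm.mul_apply, (hd x).resolve_left hx] using hx
  refine subset_antisymm ?_ (Set.union_subset (hsub hd) (hd.commute.eq ▸ hsub hd.symm))
  rintro _ ⟨x, hx, rfl⟩
  by_cases hσx : σ x = x
  · have hτx : τ x ≠ x := fun h => hx (by simp [Perm.mul_apply, h, hσx])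
    refine Or.inr ⟨x, hτx, ?_⟩
    rw [hd.commute.eq]
    exact Set.ext fun y => sameCycle_mul_iff_of_disjoint hd.symm hτx
  · exact Or.inl ⟨x, hσx, Set.ext fun y => sameCycle_mul_iff_of_disjoint hd hσx⟩

lemma disjoint_ntOrbits_of_disjoint {σ τ : Perm X} (hd : σ.Disjoint τ) :
    Disjoint (ntOrbits σ) (ntOrbits τ) := by
  refine Set.disjoint_left.mpr ?_
  rintro _ ⟨x, hx, rfl⟩ hτ
  exact (hd x).elim hx (subset_of_mem_ntOrbits hτ (Perm.SameCycle.refl σ x))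

end Orbits

section Phi

lemma negSet_image {h : Perm ℤ} (hneg : ∀ x, h (-x) = -h x) (O : Set ℤ) :
    negSet (h '' O) = h '' negSet O := by
  simp only [negSet, Set.image_image, hneg]

lemma negSet_image_eq_iff {h : Perm ℤ} (hneg : ∀ x, h (-x) = -h x) {O : Set ℤ} :
    negSet (h '' O) = h '' O ↔ negSet O = O := by
  rw [negSet_image hneg, (Set.image_injective.mpr h.injective).eq_iff]

lemma posOrbits_conj {h : Perm ℤ} (hneg : ∀ x, h (-x) = -h x) (σ : Perm ℤ) :
    posOrbits (h * σ * h⁻¹) = Set.image h '' posOrbits σ := by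
  ext O
  simp only [posOrbits, ntOrbits_conj, Set.mem_sep_iff, Set.mem_image]
  constructor
  · rintro ⟨⟨O, hO, rfl⟩, hne⟩
    exact ⟨O, ⟨hO, (negSet_image_eq_iff hneg).not.mp hne⟩, rfl⟩
  · rintro ⟨O, ⟨hO, hne⟩, rfl⟩
    exact ⟨⟨O, hO, rfl⟩, (negSet_image_eq_iff hneg).not.mpr hne⟩

lemma negOrbits_conj {h : Perm ℤ} (hneg : ∀ x, h (-x) = -h x) (σ : Perm ℤ) :
    negOrbits (h * σ * h⁻¹) = Set.image h '' negOrbits σ := by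
  ext O
  simp only [negOrbits, ntOrbits_conj, Set.mem_sep_iff, Set.mem_image]
  constructor
  · rintro ⟨⟨O, hO, rfl⟩, heq⟩
    exact ⟨O, ⟨hO, (negSet_image_eq_iff hneg).mp heq⟩, rfl⟩
  · rintro ⟨O, ⟨hO, heq⟩, rfl⟩
    exact ⟨⟨O, hO, rfl⟩, (negSet_image_eq_iff hneg).mpr heq⟩

lemma posOrbits_mul_of_disjoint {σ τ : Perm ℤ} (hd : σ.Disjoint τ) :
    posOrbits (σ * τ) = posOrbits σ ∪ posOrbits τ := by
  rw [posOrbits, ntOrbits_mul_of_disjoint hd]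
  exact Set.sep_union

lemma negOrbits_mul_of_disjoint {σ τ : Perm ℤ} (hd : σ.Disjoint τ) :
    negOrbits (σ * τ) = negOrbits σ ∪ negOrbits τ := by
  rw [negOrbits, ntOrbits_mul_of_disjoint hd]
  exact Set.sep_union

lemma negSet_mem_posOrbits {σ : Perm ℤ} (hσ : ∀ i, σ (-i) = -σ i) {O : Set ℤ}
    (hO : O ∈ posOrbits σ) : negSet O ∈ posOrbits σ := by
  have hconj : Equiv.neg ℤ * σ * (Equiv.neg ℤ)⁻¹ = σ := by
    ext x
    simp [Perm.mul_apply, Perm.inv_def, hσ]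
  rw [← hconj, posOrbits_conj (fun _ => rfl)]
  exact ⟨O, hO, rfl⟩

lemma even_finsum_posOrbits {σ : Perm ℤ} (hσ : σ ∈ BInfSet) :
    Even (∑ᶠ O ∈ posOrbits σ, (O.ncard - 1)) := by
  classical
  have hfin : (posOrbits σ).Finite := (ntOrbits_finite hσ.2).subset fun O hO => hO.1
  rw [← hfin.coe_toFinset, finsum_mem_coe_finset, even_iff_two_dvd,
    ← ZMod.natCast_eq_zero_iff, Nat.cast_sum]
  refine Finset.sum_involution (fun O _ => negSet O) (fun O _ => ?_)
    (fun O hO _ => (hfin.mem_toFinset.mp hO).2)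
    (fun O hO => hfin.mem_toFinset.mpr (negSet_mem_posOrbits hσ.1 (hfin.mem_toFinset.mp hO)))
    (fun O _ => by simp [negSet])
  rw [negSet, Set.ncard_image_of_injective O neg_injective]
  exact CharTwo.add_self_eq_zero _

lemma phi_one (qp qm : ℂ) : phi qp qm 1 = 1 := by
  have : ntOrbits (1 : Perm ℤ) = ∅ := by simp [ntOrbits]
  simp [phi, expPlus, negCount, posOrbits, negOrbits, this]

lemma phi_inv (qp qm : ℂ) (σ : Perm ℤ) : phi qp qm σ⁻¹ = phi qp qm σ := by
  simp only [phi, expPlus, negCount, posOrbits, negOrbits, ntOrbits_inv]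

lemma phi_conj (qp qm : ℂ) {h : Perm ℤ} (hneg : ∀ x, h (-x) = -h x) (σ : Perm ℤ) :
    phi qp qm (h * σ * h⁻¹) = phi qp qm σ := by
  have hinj : Function.Injective (Set.image h) := Set.image_injective.mpr h.injective
  simp only [phi, expPlus, negCount, posOrbits_conj hneg, negOrbits_conj hneg,
    finsum_mem_image hinj.injOn, Set.ncard_image_of_injective _ h.injective,
    Set.ncard_image_of_injective _ hinj]

lemma phi_mul_of_disjoint (qp qm : ℂ) {σ τ : Perm ℤ} (hσ : σ ∈ BInfSet) (hτ : τ ∈ BInfSet)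
    (hd : σ.Disjoint τ) : phi qp qm (σ * τ) = phi qp qm σ * phi qp qm τ := by
  have hfin {ρ : Perm ℤ} (hρ : ρ ∈ BInfSet) : (posOrbits ρ).Finite ∧ (negOrbits ρ).Finite :=
    ⟨(ntOrbits_finite hρ.2).subset fun O hO => hO.1, (ntOrbits_finite hρ.2).subset fun O hO => hO.1⟩
  have hdo := disjoint_ntOrbits_of_disjoint hd
  have hdpos : Disjoint (posOrbits σ) (posOrbits τ) := hdo.mono (fun O hO => hO.1) fun O hO => hO.1
  have hdneg : Disjoint (negOrbits σ) (negOrbits τ) := hdo.mono (fun O hO => hO.1) fun O hO => hO.1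
  obtain ⟨k, hk⟩ := even_finsum_posOrbits hσ
  rw [phi, phi, phi, expPlus, expPlus, expPlus, negCount, negCount, negCount,
    posOrbits_mul_of_disjoint hd, negOrbits_mul_of_disjoint hd,
    finsum_mem_union hdpos (hfin hσ).1 (hfin hτ).1, finsum_mem_union hdneg (hfin hσ).2 (hfin hτ).2,
    Set.ncard_union_eq hdneg (hfin hσ).2 (hfin hτ).2, hk]
  rw [show (k + k + ∑ᶠ O ∈ posOrbits τ, (O.ncard - 1)) / 2
      = (k + k) / 2 + (∑ᶠ O ∈ posOrbits τ, (O.ncard - 1)) / 2 by omega]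
  ring

end Phi

section PosDef

variable {G : Type*} [Group G] {S : Set G} {f : G → ℂ}

lemma isPosDefOn_congr {f' : G → ℂ} (h : ∀ a ∈ S, ∀ b ∈ S, f (a⁻¹ * b) = f' (a⁻¹ * b)) :
    IsPosDefOn S f ↔ IsPosDefOn S f' := by
  refine forall₃_congr fun k g hg => forall_congr' fun z => ?_
  simp only [h _ (hg _) _ (hg _)]

lemma IsPosDefOn.apply_inv (hf : IsPosDefOn S f) (h1 : 1 ∈ S) {g : G} (hg : g ∈ S) :
    f g⁻¹ = starRingEnd ℂ (f g) := by
  have hS : ∀ i, ![1, g] i ∈ S := Fin.forall_fin_two.mpr ⟨h1, hg⟩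
  have h₀ := Complex.nonneg_iff.mp (hf 1 ![1] (Fin.forall_fin_one.mpr h1) ![1])
  have h₁ := Complex.nonneg_iff.mp (hf 2 ![1, g] hS ![1, 1])
  have h₂ := Complex.nonneg_iff.mp (hf 2 ![1, g] hS ![1, Complex.I])
  simp [Fin.sum_univ_two, Complex.mul_re, Complex.mul_im] at h₀ h₁ h₂
  apply Complex.ext <;> simp only [Complex.conj_re, Complex.conj_im] <;> linarith

lemma nonneg_of_forall_nat_mul_add_sq_mul {x y : ℝ} (h : ∀ n : ℕ, 0 ≤ n * y + n ^ 2 * x) :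
    0 ≤ x := by
  by_contra! hx
  obtain ⟨n, hn⟩ := exists_nat_gt (max (y / -x) 0)
  have hn0 : (0 : ℝ) < n := (le_max_right _ _).trans_lt hn
  have hy : y < n * -x := (div_lt_iff₀ (neg_pos.mpr hx)).mp ((le_max_left _ _).trans_lt hn)
  nlinarith [h n]

lemma IsPosDefOn.normSq_le_re (hf : IsPosDefOn S f) (h1 : 1 ∈ S) (hf1 : f 1 = 1) {g : ℕ → G}
    (hg : ∀ i, g i ∈ S) {a c : ℂ} (ha : ∀ i, f (g i) = a)
    (hc : ∀ i j, i ≠ j → f ((g j)⁻¹ * g i) = c) : Complex.normSq a ≤ c.re := by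
  have hrow (n : ℕ) (i : Fin n) : ∑ j : Fin n, f ((g j)⁻¹ * g i) = 1 + (n - 1) * c := by
    have hentry (j : Fin n) : f ((g j)⁻¹ * g i) = c + if i = j then 1 - c else 0 := by
      split_ifs with hij
      · rw [hij, inv_mul_cancel, hf1]; ring
      · rw [hc _ _ (Fin.val_injective.ne hij), add_zero]
    simp only [hentry, Finset.sum_add_distrib, Finset.sum_ite_eq, Finset.mem_univ, if_true,
      Finset.sum_const, Finset.card_univ, Fintype.card_fin, nsmul_eq_mul]
    ring
  rw [← sub_nonneg]
  refine nonneg_of_forall_nat_mul_add_sq_mul (y := 1 - c.re) fun n => ?_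
  have hpos := hf (n + 1) (Fin.cons 1 fun i : Fin n => g i) (Fin.cases h1 fun i => hg i)
    (Fin.cons (-(n : ℂ) * a) 1)
  simp only [Fin.sum_univ_succ, Fin.cons_zero, Fin.cons_succ, Pi.one_apply, map_one, one_mul,
    mul_one, inv_one, hf1, ha, hf.apply_inv h1 (hg _), hrow, Finset.sum_const, Finset.card_univ,
    Fintype.card_fin, nsmul_eq_mul, map_mul, map_neg, Complex.conj_natCast] at hpos
  have hQ := (Complex.nonneg_iff.mp (hpos.trans_eq (by
    linear_combination (-(n : ℂ) ^ 2) * Complex.mul_conj a :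
      _ = (n : ℂ) * (1 - c) + (n : ℂ) ^ 2 * (c - (Complex.normSq a : ℂ))))).1
  simpa [sq] using hQ

end PosDef

section Blocks

def signedFun (p : Perm ℕ) (x : ℤ) : ℤ := x.sign * (p (x.natAbs - 1) + 1 : ℕ)

lemma signedFun_of_ne_zero {p : Perm ℕ} {x : ℤ} (hx : x ≠ 0) :
    (signedFun p x).natAbs = p (x.natAbs - 1) + 1 ∧ (signedFun p x).sign = x.sign := by
  refine ⟨by rw [signedFun, Int.natAbs_mul, Int.natAbs_sign_of_ne_zero hx, one_mul,
    Int.natAbs_natCast], ?_⟩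
  rw [signedFun, Int.sign_mul, Int.sign_natCast_of_ne_zero (Nat.succ_ne_zero _), mul_one,
    Int.sign_sign]

lemma signedFun_signedFun (p q : Perm ℕ) (x : ℤ) :
    signedFun p (signedFun q x) = signedFun (p * q) x := by
  rcases eq_or_ne x 0 with rfl | hx
  · simp [signedFun]
  obtain ⟨habs, hsign⟩ := signedFun_of_ne_zero (p := q) hx
  rw [signedFun, habs, hsign, Nat.add_sub_cancel, signedFun, Perm.mul_apply]

lemma signedFun_of_apply_eq {p : Perm ℕ} {x : ℤ} (h : p (x.natAbs - 1) = x.natAbs - 1) :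
    signedFun p x = x := by
  rcases eq_or_ne x 0 with rfl | hx
  · simp [signedFun]
  rw [signedFun, h, Nat.sub_add_cancel (Int.natAbs_pos.mpr hx), Int.sign_mul_natAbs]

lemma signedFun_neg (p : Perm ℕ) (x : ℤ) : signedFun p (-x) = -signedFun p x := by
  simp [signedFun]

def signedPerm : Perm ℕ →* Perm ℤ where
  toFun p :=
    { toFun := signedFun p
      invFun := signedFun p⁻¹
      left_inv x := by rw [signedFun_signedFun, inv_mul_cancel, signedFun_of_apply_eq rfl]
      right_inv x := by rw [signedFun_signedFun, mul_inv_cancel, signedFun_of_apply_eq rfl] }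
  map_one' := Perm.ext fun x => signedFun_of_apply_eq rfl
  map_mul' p q := Perm.ext fun x => (signedFun_signedFun p q x).symm

def blockNat (N : ℕ) [NeZero N] : Perm ℕ →* Perm ℕ where
  toFun π := (Nat.divModEquiv N).symm.permCongrHom (π.prodCongr (Equiv.refl _))
  map_one' := by ext m; simpa using Nat.div_add_mod' m N
  map_mul' π ρ := by rw [← map_mul]; rfl

lemma blockNat_apply (N : ℕ) [NeZero N] (π : Perm ℕ) (m : ℕ) :
    blockNat N π m = π (m / N) * N + m % N := by
  simp [blockNat]

def block (N i : ℕ) : Set ℤ := {x | x ≠ 0 ∧ (x.natAbs - 1) / N = i}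

/-- Maps `±(qN + r + 1)` to `±(π q * N + r + 1)` for `r < N`: it permutes the blocks of `N`
consecutive absolute values according to `π`, keeping signs and positions within a block. -/
def blockPerm (N : ℕ) [NeZero N] : Perm ℕ →* Perm ℤ := signedPerm.comp (blockNat N)

lemma blockPerm_apply (N : ℕ) [NeZero N] (π : Perm ℕ) (x : ℤ) :
    blockPerm N π x = signedFun (blockNat N π) x := rfl

lemma blockPerm_apply_mem_block {N i : ℕ} [NeZero N] (π : Perm ℕ) {x : ℤ} (hx : x ∈ block N i) :
    blockPerm N π x ∈ block N (π i) := by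
  have hN := Nat.pos_of_neZero N
  obtain ⟨hx0, rfl⟩ := hx
  obtain ⟨habs, -⟩ := signedFun_of_ne_zero (p := blockNat N π) hx0
  rw [← blockPerm_apply] at habs
  refine ⟨fun h => by simp [h] at habs, ?_⟩
  rw [habs, Nat.add_sub_cancel, blockNat_apply, Nat.mul_comm, Nat.mul_add_div hN,
    Nat.div_eq_of_lt (Nat.mod_lt _ hN), add_zero]

lemma blockPerm_apply_of_mem_block {N i : ℕ} [NeZero N] {π : Perm ℕ} (hπ : π i = i) {x : ℤ}
    (hx : x ∈ block N i) : blockPerm N π x = x := by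
  obtain ⟨-, rfl⟩ := hx
  exact signedFun_of_apply_eq (by rw [blockNat_apply, hπ, Nat.div_add_mod'])

lemma blockPerm_neg (N : ℕ) [NeZero N] (π : Perm ℕ) (x : ℤ) :
    blockPerm N π (-x) = -blockPerm N π x :=
  signedFun_neg _ x

lemma block_finite (N i : ℕ) [NeZero N] : (block N i).Finite := by
  refine (Set.finite_Icc (-((i + 1) * N : ℕ) : ℤ) ((i + 1) * N : ℕ)).subset fun x hx => ?_
  have : x.natAbs - 1 < (i + 1) * N :=
    (Nat.div_lt_iff_lt_mul (Nat.pos_of_neZero N)).mp (Nat.lt_succ_iff.mpr hx.2.le)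
  simp only [Set.mem_Icc]
  omega

lemma blockPerm_swap_mem_BInfSet (N : ℕ) [NeZero N] (a b : ℕ) :
    blockPerm N (swap a b) ∈ BInfSet := by
  refine ⟨blockPerm_neg N _, ((block_finite N a).union (block_finite N b)).subset fun x hx => ?_⟩
  have hx0 : x ≠ 0 := by
    rintro rfl
    exact hx (by simp [blockPerm_apply, signedFun])
  by_contra hab
  simp only [Set.mem_union, block, Set.mem_ofPred_eq, hx0, ne_eq, not_false_eq_true, true_and,
    not_or] at hab
  exact hx (blockPerm_apply_of_mem_block (swap_apply_of_ne_of_ne hab.1 hab.2) ⟨hx0, rfl⟩)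

def blockCopy (N : ℕ) [NeZero N] (i : ℕ) (σ : Perm ℤ) : Perm ℤ :=
  blockPerm N (swap 0 i) * σ * (blockPerm N (swap 0 i))⁻¹

lemma setOf_blockCopy_apply_ne_subset {N : ℕ} [NeZero N] {σ : Perm ℤ}
    (hσ : {x | σ x ≠ x} ⊆ block N 0) (i : ℕ) : {x | blockCopy N i σ x ≠ x} ⊆ block N i := by
  rw [blockCopy, setOf_conj_apply_ne]
  rintro _ ⟨x, hx, rfl⟩
  simpa using blockPerm_apply_mem_block (swap 0 i) (hσ hx)

lemma blockPerm_conj_blockCopy {N : ℕ} [NeZero N] {σ : Perm ℤ} (hσ : {x | σ x ≠ x} ⊆ block N 0)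
    (π : Perm ℕ) (i : ℕ) :
    blockPerm N π * blockCopy N i σ * (blockPerm N π)⁻¹ = blockCopy N (π i) σ := by
  set ρ := swap 0 (π i) * π * swap 0 i
  have hρ : ρ 0 = 0 := by simp [ρ]
  have hcomm : Commute (blockPerm N ρ) σ := Perm.Disjoint.commute fun x =>
    or_iff_not_imp_right.mpr fun hx => blockPerm_apply_of_mem_block hρ (hσ hx)
  have hπ : π * swap 0 i = swap 0 (π i) * ρ := by simp [ρ, ← mul_assoc]
  calc blockPerm N π * blockCopy N i σ * (blockPerm N π)⁻¹
      = blockPerm N (π * swap 0 i) * σ * (blockPerm N (π * swap 0 i))⁻¹ := by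
        simp only [blockCopy, map_mul]; group
    _ = blockPerm N (swap 0 (π i)) * (blockPerm N ρ * σ * (blockPerm N ρ)⁻¹) *
          (blockPerm N (swap 0 (π i)))⁻¹ := by
        rw [hπ, map_mul]; group
    _ = blockCopy N (π i) σ := by rw [hcomm.mul_inv_cancel, blockCopy]

lemma exists_conjugate_copies {σ : Perm ℤ} (hσ : σ ∈ BInfSet) :
    ∃ g : ℕ → Perm ℤ, (∀ i, ∃ h ∈ BInfSet, g i = h * σ * h⁻¹) ∧
      Pairwise (fun i j => (g i).Disjoint (g j)) ∧
      ∀ i j, i ≠ j → ∃ h ∈ BInfSet, h * ((g j)⁻¹ * g i) * h⁻¹ = (g 1)⁻¹ * g 0 := by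
  obtain ⟨M, hM⟩ := (hσ.2.image Int.natAbs).bddAbove
  have hblock : {x | σ x ≠ x} ⊆ block (M + 1) 0 := fun x hx =>
    ⟨fun h => hx (h ▸ apply_zero_of_mem_BInfSet hσ),
      Nat.div_eq_of_lt (by have := hM ⟨x, hx, rfl⟩; omega)⟩
  have hsupp := setOf_blockCopy_apply_ne_subset hblock
  refine ⟨fun i => blockCopy (M + 1) i σ,
    fun i => ⟨_, blockPerm_swap_mem_BInfSet _ 0 i, rfl⟩, fun i j hij x => ?_, fun i j hij => ?_⟩
  · by_contra! h
    exact hij ((hsupp i h.1).2.symm.trans (hsupp j h.2).2)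
  · set π := swap 1 (swap 0 i j) * swap 0 i
    have hi : π i = 0 := by
      have : swap 0 i j ≠ 0 := by simpa [swap_apply_eq_iff] using hij.symm
      simp [π, swap_apply_of_ne_of_ne zero_ne_one this.symm]
    have hj : π j = 1 := by simp [π]
    refine ⟨blockPerm (M + 1) π, ?_, ?_⟩
    · rw [map_mul]
      exact mul_mem_BInfSet (blockPerm_swap_mem_BInfSet _ _ _) (blockPerm_swap_mem_BInfSet _ _ _)
    · calc blockPerm (M + 1) π * ((blockCopy (M + 1) j σ)⁻¹ * blockCopy (M + 1) i σ) *
            (blockPerm (M + 1) π)⁻¹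
          = (blockPerm (M + 1) π * blockCopy (M + 1) j σ * (blockPerm (M + 1) π)⁻¹)⁻¹ *
            (blockPerm (M + 1) π * blockCopy (M + 1) i σ * (blockPerm (M + 1) π)⁻¹) := by group
        _ = _ := by rw [blockPerm_conj_blockCopy hblock, blockPerm_conj_blockCopy hblock, hi, hj]

end Blocks

lemma eq_of_mul_normSq_add_mul_normSq_le {x y : ℂ} {t s : ℝ} (ht : 0 < t) (hs : 0 < s)
    (hts : t + s = 1)
    (h : t * Complex.normSq x + s * Complex.normSq y ≤ Complex.normSq (t * x + s * y)) :
    x = y := by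
  have hgap : t * Complex.normSq x + s * Complex.normSq y - Complex.normSq (t * x + s * y)
      = t * s * Complex.normSq (x - y) := by
    obtain rfl : s = 1 - t := by linarith
    simp only [Complex.normSq_apply, Complex.add_re, Complex.add_im, Complex.mul_re,
      Complex.mul_im, Complex.ofReal_re, Complex.ofReal_im, Complex.sub_re, Complex.sub_im]
    ring
  have hle : Complex.normSq (x - y) ≤ 0 := by
    nlinarith [mul_pos ht hs, Complex.normSq_nonneg (x - y)]
  exact sub_eq_zero.mp (Complex.normSq_eq_zero.mp (hle.antisymm (Complex.normSq_nonneg _)))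

section Characters

lemma phiB_eq_phi {qp qm : ℂ} {σ : Perm ℤ} (hσ : σ ∈ BInfSet) : phiB qp qm σ = phi qp qm σ :=
  if_pos hσ

lemma phiB_mem_CharSetB_iff (qp qm : ℂ) :
    phiB qp qm ∈ CharSetB ↔ IsPosDefOn BInfSet (phi qp qm) := by
  have hpd : IsPosDefOn BInfSet (phiB qp qm) ↔ IsPosDefOn BInfSet (phi qp qm) :=
    isPosDefOn_congr fun a ha b hb => phiB_eq_phi (mul_mem_BInfSet (inv_mem_BInfSet ha) hb)
  refine ⟨fun h => hpd.mp h.2.2.1,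
    fun h => ⟨fun σ hσ => if_neg hσ, fun g hg k hk => ?_, hpd.mpr h, ?_⟩⟩
  · rw [phiB_eq_phi (mul_mem_BInfSet (mul_mem_BInfSet hk hg) (inv_mem_BInfSet hk)),
      phiB_eq_phi hg, phi_conj qp qm hk.1]
  · rw [phiB_eq_phi one_mem_BInfSet, phi_one]

lemma exists_phi_eq_sq_and_normSq_le {σ : Perm ℤ} (hσ : σ ∈ BInfSet) (qp qm : ℂ) :
    ∃ e ∈ BInfSet, phi qp qm e = phi qp qm σ ^ 2 ∧
      ∀ ψ ∈ CharSetB, Complex.normSq (ψ σ) ≤ (ψ e).re := by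
  obtain ⟨g, hconj, hdisj, hpair⟩ := exists_conjugate_copies hσ
  have hgB (i : ℕ) : g i ∈ BInfSet := by
    obtain ⟨h, hh, hgi⟩ := hconj i
    exact hgi ▸ mul_mem_BInfSet (mul_mem_BInfSet hh hσ) (inv_mem_BInfSet hh)
  have hquot (i j : ℕ) : (g j)⁻¹ * g i ∈ BInfSet :=
    mul_mem_BInfSet (inv_mem_BInfSet (hgB j)) (hgB i)
  refine ⟨(g 1)⁻¹ * g 0, hquot 0 1, ?_, fun ψ hψ => ?_⟩
  · have hphi (i : ℕ) : phi qp qm (g i) = phi qp qm σ := by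
      obtain ⟨h, hh, hgi⟩ := hconj i
      rw [hgi, phi_conj qp qm hh.1]
    rw [phi_mul_of_disjoint qp qm (inv_mem_BInfSet (hgB 1)) (hgB 0) (hdisj one_ne_zero).inv_left,
      phi_inv, hphi, hphi, sq]
  · refine hψ.2.2.1.normSq_le_re one_mem_BInfSet hψ.2.2.2 hgB (fun i => ?_) (fun i j hij => ?_)
    · obtain ⟨h, hh, hgi⟩ := hconj i
      rw [hgi, hψ.2.1 σ hσ h hh]
    · obtain ⟨h, hh, he⟩ := hpair i j hij
      rw [← he, hψ.2.1 _ (hquot i j) h hh]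

lemma phiB_mem_extremePoints {qp qm : ℂ} (hchar : phiB qp qm ∈ CharSetB) :
    phiB qp qm ∈ Set.extremePoints ℝ CharSetB := by
  refine mem_extremePoints_iff_left.mpr ⟨hchar, fun f hf g hg ⟨t, s, ht, hs, hts, hfg⟩ => ?_⟩
  have hcomb (τ : Perm ℤ) : t * f τ + s * g τ = phiB qp qm τ := by
    simpa using congrFun hfg τ
  funext σ
  by_cases hσ : σ ∈ BInfSet
  swap
  · rw [hf.1 σ hσ, hchar.1 σ hσ]
  obtain ⟨e, he, hphie, hbound⟩ := exists_phi_eq_sq_and_normSq_le hσ qp qm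
  have hreal : starRingEnd ℂ (phi qp qm σ) = phi qp qm σ := by
    rw [← phiB_eq_phi hσ, ← hchar.2.2.1.apply_inv one_mem_BInfSet hσ,
      phiB_eq_phi (inv_mem_BInfSet hσ), phi_inv, phiB_eq_phi hσ]
  have hfσ : f σ = g σ := by
    refine eq_of_mul_normSq_add_mul_normSq_le ht hs hts ?_
    calc t * Complex.normSq (f σ) + s * Complex.normSq (g σ)
        ≤ t * (f e).re + s * (g e).re := by
          gcongr
          exacts [hbound f hf, hbound g hg]
      _ = (phiB qp qm e).re := by simp [← hcomb e]
      _ = Complex.normSq (t * f σ + s * g σ) := by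
          rw [hcomb σ, phiB_eq_phi he, phiB_eq_phi hσ, hphie, sq]
          nth_rw 2 [← hreal]
          rw [Complex.mul_conj, Complex.ofReal_re]
  rw [← hcomb σ, ← hfσ, ← add_mul, ← Complex.ofReal_add, hts, Complex.ofReal_one, one_mul]

end Characters

/-- positive definiteness of φ_{q₊,q₋} on B(∞), being a character of B(∞)
and being an extreme character of B(∞) are all equivalent. -/
theorem posdef_iff_character_iff_extreme (qp qm : ℂ) :
    (IsPosDefOn BInfSet (phi qp qm) ↔ phiB qp qm ∈ CharSetB) ∧
    (phiB qp qm ∈ CharSetB ↔ phiB qp qm ∈ Set.extremePoints ℝ CharSetB) :=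
  ⟨(phiB_mem_CharSetB_iff qp qm).symm, phiB_mem_extremePoints, fun h => h.1⟩

end TypeB
end
end

section
/- Let M,N ∈ ℕ with M+N ≥ 1 and ε ∈ {1,−1}. Let V be a complex vector space with basis e₁⁺,…,e_M⁺, e₁⁻,…,e_N⁻, and define for g = (g₁,…,g_n;τ) ∈ B(n) of cycle type (ρ⁺,ρ⁻) the linear map ω_n(g) on V^{⊗n} by ω_n(g)(f₁⊗…⊗f_n) = ε^{‖ρ⁺‖+‖ρ⁻‖} c₁(f_{τ⁻¹(1)})⊗…⊗c_n(f_{τ⁻¹(n)}), where c_i fixes every e_j⁺ and sends every e_j⁻ to g_i·e_j⁻. Then ω_n is a representation of B(n) on V^{⊗n}, and for every g of cycle type (ρ⁺,ρ⁻) its normalized character satisfies Tr ω_n(g)/Tr ω_n(id) = (ε/(M+N))^{‖ρ⁺‖+‖ρ⁻‖}·((M−N)/(M+N))^{ℓ(ρ⁻)} = φ_{q₊,q₋}(g) with q₊ = ε/(M+N), q₋ = (M−N)/(M+N). -/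
/-!
In the basis `e_b`, `b : Fin n → Fin M ⊕ Fin N`, of `V^{⊗n}`, the operator `ω_n(g;τ)` sends
`e_b` to `ε^{‖ρ⁺‖+‖ρ⁻‖} · ±e_{b∘τ⁻¹}`, where the sign collects the `g_i` at the positions
carrying an `e⁻`-vector. These signed permutation matrices multiply like the wreath product,
and the scalar `ε^{‖ρ⁺‖+‖ρ⁻‖}` is multiplicative because `(-1)^{n - #cycles(τ)} = sign τ`.

Only the `b` constant on the cycles of `τ` contribute to the trace, and the value on each cycle
can be chosen freely: a cycle `c` contributes `M + N·(sign of c)`, that is `M + N` or `M - N`.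
Hence `Tr ω_n(g) = ε^{‖ρ⁺‖+‖ρ⁻‖} (M - N)^{ℓ(ρ⁻)} (M + N)^{ℓ(ρ⁺)}`, and dividing by
`Tr ω_n(1) = (M + N)^n` with `n = ‖ρ⁺‖ + ‖ρ⁻‖ + ℓ(ρ⁺) + ℓ(ρ⁻)` gives `φ_{q₊,q₋}`.
-/

noncomputable section

namespace TypeB

/-- An element of the hyperoctahedral group B(n) in the signed model ℤ₂ ≀ S_n:
a vector of signs together with a permutation. -/
abbrev WB (n : ℕ) := (Fin n → ℤˣ) × Equiv.Perm (Fin n)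

def wmul {n : ℕ} (a b : WB n) : WB n :=
  (fun i => a.1 i * b.1 (a.2⁻¹ i), a.2 * b.2)

def wone (n : ℕ) : WB n := (fun _ => 1, 1)

def orbitsOf {n : ℕ} (τ : Equiv.Perm (Fin n)) : Set (Set (Fin n)) :=
  {O | ∃ i : Fin n, O = {j | τ.SameCycle i j}}

/-- The number of cycles of τ (fixed points included), i.e. ℓ(ρ⁺)+ℓ(ρ⁻). -/
def cycCount {n : ℕ} (τ : Equiv.Perm (Fin n)) : ℕ := (orbitsOf τ).ncard

/-- ‖ρ⁺‖+‖ρ⁻‖ = n − (number of cycles of τ). -/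
def expo {n : ℕ} (x : WB n) : ℕ := n - cycCount x.2

/-- ℓ(ρ⁻): the number of negative cycles, i.e. cycles c of τ with ∏_{a∈c} g_a = −1. -/
def negCyc {n : ℕ} (x : WB n) : ℕ :=
  {O ∈ orbitsOf x.2 | (∏ᶠ j ∈ O, x.1 j) = -1}.ncard

/-- The basis of V^{⊗n}: functions assigning to each tensor position a basis vector of V,
the basis of V being indexed by Fin M ⊕ Fin N (left = e⁺-vectors, right = e⁻-vectors). -/
abbrev TIdx (M N n : ℕ) := Fin n → (Fin M) ⊕ (Fin N)

/-- The matrix of ω_n(g₁,…,g_n;τ) on V^{⊗n} in the basis indexed by `TIdx M N n`: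
the basis vector e_b is sent to ε^{‖ρ⁺‖+‖ρ⁻‖} · ∏_i (sign picked up by c_i) · e_{b∘τ⁻¹}. -/
def rep (M N : ℕ) (ε : ℤ) {n : ℕ} (x : WB n) :
    Matrix (TIdx M N n) (TIdx M N n) ℂ :=
  fun a b =>
    if a = fun i => b (x.2⁻¹ i) then
      (ε : ℂ) ^ expo x *
        ∏ i : Fin n, (if (b (x.2⁻¹ i)).isRight then ((x.1 i : ℤ) : ℂ) else 1)
    else 0

open Equiv Equiv.Perm Finset

section Cycles

variable {α : Type*}

abbrev Cycles (σ : Perm α) : Type _ := Quotient (SameCycle.setoid σ)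

abbrev Cycles.mk (σ : Perm α) : α → Cycles σ := Quotient.mk _

theorem Cycles.sameCycle_out_mk (σ : Perm α) (i : α) : σ.SameCycle (Cycles.mk σ i).out i :=
  Quotient.mk_out (s := SameCycle.setoid σ) i

theorem Cycles.out_mk_of_apply_eq {σ : Perm α} {i : α} (hi : σ i = i) :
    (Cycles.mk σ i).out = i :=
  ((Cycles.sameCycle_out_mk σ i).symm.eq_of_left hi).symm

theorem Cycles.injective_preimage_mk (σ : Perm α) :
    Function.Injective fun q : Cycles σ => Cycles.mk σ ⁻¹' {q} :=
  (Set.preimage_injective.2 Quotient.mk_surjective).comp Set.singleton_injective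

variable [Fintype α]

theorem apply_eq_of_sameCycle {β : Type*} {σ : Perm α} {b : α → β}
    (hb : b = fun i => b (σ⁻¹ i)) {i j : α} (h : σ.SameCycle i j) : b i = b j := by
  have hσ : ∀ i, b (σ i) = b i := fun i => by simpa using congrFun hb (σ i)
  obtain ⟨k, rfl⟩ := h.exists_nat_pow_eq
  clear h
  induction k with
  | zero => rfl
  | succ k ih => rw [ih, pow_succ', mul_apply, hσ]

variable [DecidableEq α]

instance (σ : Perm α) : DecidableRel (SameCycle.setoid σ).r :=
  inferInstanceAs (DecidableRel (SameCycle σ))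

theorem card_cycles_out_notMem_support (σ : Perm α) :
    #{q : Cycles σ | q.out ∉ σ.support} = #σ.supportᶜ := by
  refine card_nbij' (fun q => q.out) (Cycles.mk σ) (fun q hq => by simpa using hq)
    (fun i hi => ?_) (fun q _ => Quotient.out_eq q) (fun i hi => ?_)
  · simpa [Cycles.out_mk_of_apply_eq (notMem_support.1 (mem_compl.1 hi))] using hi
  · exact Cycles.out_mk_of_apply_eq (notMem_support.1 (mem_compl.1 hi))

theorem card_cycles_out_mem_support (σ : Perm α) :
    #{q : Cycles σ | q.out ∈ σ.support} = #σ.cycleFactorsFinset := by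
  refine card_bij (fun q _ => σ.cycleOf q.out)
    (fun q hq => cycleOf_mem_cycleFactorsFinset_iff.2 (mem_filter.1 hq).2) (fun q _ q' hq' h => ?_)
    (fun c hc => ?_)
  · have : q'.out ∈ (σ.cycleOf q.out).support := by
      rw [h, mem_support_cycleOf_iff]
      exact ⟨.rfl, (mem_filter.1 hq').2⟩
    rw [← Quotient.out_eq q, ← Quotient.out_eq q']
    exact Quotient.sound (mem_support_cycleOf_iff.1 this).1
  · obtain ⟨a, ha⟩ := (mem_cycleFactorsFinset_iff.1 hc).1.nonempty_support
    have hq := Cycles.sameCycle_out_mk σ a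
    refine ⟨Cycles.mk σ a, mem_filter.2 ⟨mem_univ _, ?_⟩, ?_⟩
    · exact hq.mem_support_iff.2 (mem_cycleFactorsFinset_support_le hc ha)
    · rw [hq.cycleOf_eq]
      exact (cycle_is_cycleOf ha hc).symm

theorem card_cycles (σ : Perm α) :
    Fintype.card (Cycles σ) = #σ.supportᶜ + #σ.cycleFactorsFinset := by
  rw [← card_cycles_out_notMem_support, ← card_cycles_out_mem_support, add_comm,
    card_filter_add_card_filter_not, card_univ]

theorem card_cycles_le (σ : Perm α) : Fintype.card (Cycles σ) ≤ Fintype.card α :=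
  Fintype.card_quotient_le _

theorem card_cycleType_le_sum (σ : Perm α) : Multiset.card σ.cycleType ≤ σ.cycleType.sum := by
  simpa using Multiset.card_nsmul_le_sum (s := σ.cycleType) (a := 1)
    (fun _ hk => (one_lt_of_mem_cycleType hk).le)

theorem sign_eq_neg_one_pow_card_sub_card_cycles (σ : Perm α) :
    sign σ = (-1 : ℤˣ) ^ (Fintype.card α - Fintype.card (Cycles σ)) := by
  have hcard : Fintype.card α - Fintype.card (Cycles σ)
      = σ.cycleType.sum - Multiset.card σ.cycleType := by
    have := σ.sum_cycleType_le
    have := card_cycleType_le_sum σ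
    have : Multiset.card σ.cycleType = #σ.cycleFactorsFinset := Multiset.card_map _ _
    rw [card_cycles, card_compl, ← sum_cycleType]
    omega
  obtain ⟨k, hk⟩ := Nat.exists_eq_add_of_le' (card_cycleType_le_sum σ)
  rw [sign_of_cycleType, hcard, hk, Nat.add_sub_cancel, add_assoc, ← two_mul, pow_add, pow_mul]
  simp

theorem sum_invariant_prod_eq_prod_cycles {β R : Type*} [Fintype β] [DecidableEq β]
    [CommSemiring R] (σ : Perm α) (w : α → β → R) :
    ∑ b : α → β with b = (fun i => b (σ⁻¹ i)), ∏ i, w i (b i)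
      = ∏ q : Cycles σ, ∑ v, ∏ i with Cycles.mk σ i = q, w i v := by
  have hfiber (c : Cycles σ → β) :
      ∏ q, ∏ i with Cycles.mk σ i = q, w i (c q) = ∏ i, w i (c (Cycles.mk σ i)) := by
    rw [← prod_fiberwise univ (Cycles.mk σ)]
    exact prod_congr rfl fun q _ => prod_congr rfl fun i hi => by rw [(mem_filter.1 hi).2]
  have hout {b : α → β} (hb : b ∈ ({b | b = fun i => b (σ⁻¹ i)} : Finset (α → β))) :
      (fun i => b (Cycles.mk σ i).out) = b :=
    funext fun i => apply_eq_of_sameCycle (mem_filter.1 hb).2 (Cycles.sameCycle_out_mk σ i)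
  rw [Fintype.prod_sum]
  simp_rw [hfiber]
  refine sum_nbij' (fun b q => b q.out) (fun c i => c (Cycles.mk σ i)) (fun _ _ => mem_univ _)
    (fun c _ => ?_) (fun b hb => hout hb) (fun c _ => funext fun q => congrArg c q.out_eq)
    (fun b hb => congrArg (fun b => ∏ i, w i (b i)) (hout hb).symm)
  refine mem_filter.2 ⟨mem_univ _, funext fun i => congrArg c (Quotient.sound ?_)⟩
  exact (sameCycle_symm_apply_right (f := σ)).2 .rfl

end Cycles

section WreathProduct

variable {n : ℕ}

theorem orbitsOf_eq_range (τ : Perm (Fin n)) :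
    orbitsOf τ = Set.range fun q : Cycles τ => Cycles.mk τ ⁻¹' {q} := by
  have (i : Fin n) : {j | τ.SameCycle i j} = Cycles.mk τ ⁻¹' {Cycles.mk τ i} := by
    ext j
    exact ⟨fun h => Quotient.sound h.symm, fun h => (Quotient.exact h).symm⟩
  ext O
  simp only [orbitsOf, this, Set.mem_ofPred_eq, Set.mem_range, Quotient.exists, eq_comm]

theorem cycCount_eq_card_cycles (τ : Perm (Fin n)) : cycCount τ = Fintype.card (Cycles τ) := by
  rw [cycCount, orbitsOf_eq_range, ← Set.image_univ,
    Set.ncard_image_of_injective _ (Cycles.injective_preimage_mk τ), Set.ncard_univ,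
    Nat.card_eq_fintype_card]

def cycleSign (x : WB n) (q : Cycles x.2) : ℤˣ := ∏ i with Cycles.mk x.2 i = q, x.1 i

theorem negCyc_eq_card_cycleSign (x : WB n) : negCyc x = #{q | cycleSign x q = -1} := by
  have hsign (q : Cycles x.2) : ∏ᶠ j ∈ Cycles.mk x.2 ⁻¹' {q}, x.1 j = cycleSign x q := by
    rw [cycleSign, ← finprod_mem_coe_finset]
    congr! 2
    ext; simp
  have himage : {O ∈ orbitsOf x.2 | ∏ᶠ j ∈ O, x.1 j = -1}
      = (fun q => Cycles.mk x.2 ⁻¹' {q}) '' ↑({q | cycleSign x q = -1} : Finset (Cycles x.2)) := by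
    ext O
    simp only [orbitsOf_eq_range, Set.mem_ofPred_eq, Set.mem_image, Set.mem_range, coe_filter,
      mem_univ, true_and]
    constructor
    · rintro ⟨⟨q, rfl⟩, hq⟩
      exact ⟨q, by rwa [← hsign], rfl⟩
    · rintro ⟨q, hq, rfl⟩
      exact ⟨⟨q, rfl⟩, by rwa [hsign]⟩
  rw [negCyc, himage, Set.ncard_image_of_injective _ (Cycles.injective_preimage_mk _),
    Set.ncard_coe_finset]

theorem negCyc_le_cycCount (x : WB n) : negCyc x ≤ cycCount x.2 := by
  rw [negCyc_eq_card_cycleSign, cycCount_eq_card_cycles]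
  exact card_filter_le _ _

theorem expo_add_cycCount (x : WB n) : expo x + cycCount x.2 = n := by
  have := card_cycles_le x.2
  rw [expo, cycCount_eq_card_cycles, Fintype.card_fin] at *
  omega

theorem neg_one_pow_expo (x : WB n) : (-1 : ℤˣ) ^ expo x = sign x.2 := by
  rw [sign_eq_neg_one_pow_card_sub_card_cycles, expo, cycCount_eq_card_cycles, Fintype.card_fin]

theorem pow_expo_wmul {ε : ℤ} (hε : ε = 1 ∨ ε = -1) (x y : WB n) :
    ε ^ expo (wmul x y) = ε ^ expo x * ε ^ expo y := by
  rcases hε with rfl | rfl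
  · simp
  · have h (z : WB n) : (-1 : ℤ) ^ expo z = sign z.2 := by
      rw [← neg_one_pow_expo]; push_cast; rfl
    rw [h, h, h, show (wmul x y).2 = x.2 * y.2 from rfl, Perm.sign_mul, Units.val_mul]

theorem expo_wone : expo (wone n) = 0 := by
  rw [expo, show (wone n).2 = 1 from rfl, cycCount_eq_card_cycles, Nat.sub_eq_zero_iff_le]
  exact (Fintype.card_fin n).symm.le.trans
    (Fintype.card_le_of_injective (Cycles.mk 1) fun i j h => sameCycle_one.1 (Quotient.exact h))

end WreathProduct

section Representation

variable {M N n : ℕ} {ε : ℤ}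

def signFactor (x : WB n) (b : TIdx M N n) : ℂ :=
  ∏ i, if (b (x.2⁻¹ i)).isRight then ((x.1 i : ℤ) : ℂ) else 1

theorem rep_apply (x : WB n) (a b : TIdx M N n) :
    rep M N ε x a b
      = if a = (fun i => b (x.2⁻¹ i)) then (ε : ℂ) ^ expo x * signFactor x b else 0 :=
  rfl

theorem signFactor_wmul (x y : WB n) (c : TIdx M N n) :
    signFactor (wmul x y) c = signFactor x (fun i => c (y.2⁻¹ i)) * signFactor y c := by
  have hy : signFactor y c
      = ∏ i, if (c (y.2⁻¹ (x.2⁻¹ i))).isRight then ((y.1 (x.2⁻¹ i) : ℤ) : ℂ) else 1 :=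
    (Equiv.prod_comp x.2⁻¹ fun i => if (c (y.2⁻¹ i)).isRight then ((y.1 i : ℤ) : ℂ) else 1).symm
  rw [hy, signFactor, signFactor, ← prod_mul_distrib]
  refine prod_congr rfl fun i _ => ?_
  simp only [wmul, mul_inv_rev, Perm.mul_apply]
  split_ifs <;> push_cast <;> ring

theorem rep_wmul (hε : ε = 1 ∨ ε = -1) (x y : WB n) :
    rep M N ε (wmul x y) = rep M N ε x * rep M N ε y := by
  ext a c
  rw [Matrix.mul_apply, Fintype.sum_eq_single (fun i => c (y.2⁻¹ i))]
  · have hε' : (ε : ℂ) ^ expo (wmul x y) = ε ^ expo x * ε ^ expo y := by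
      exact_mod_cast pow_expo_wmul hε x y
    have hinv : (fun i => c ((wmul x y).2⁻¹ i)) = fun i => c (y.2⁻¹ (x.2⁻¹ i)) := rfl
    rw [rep_apply, rep_apply, rep_apply y, if_pos rfl, hε', signFactor_wmul, hinv]
    split_ifs <;> ring
  · intro b hb
    rw [rep_apply y b c, if_neg hb, mul_zero]

theorem rep_wone : rep M N ε (wone n) = 1 := by
  ext a b
  rw [rep_apply, expo_wone]
  simp [signFactor, wone, Matrix.one_apply]

theorem sum_prod_ite_isRight {ι R : Type*} [CommSemiring R] (s : Finset ι) (g : ι → R) :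
    ∑ v : Fin M ⊕ Fin N, ∏ i ∈ s, (if v.isRight then g i else 1) = M + N * ∏ i ∈ s, g i := by
  simp [Fintype.sum_sum_type]

theorem trace_rep_eq_prod_cycles (x : WB n) :
    (rep M N ε x).trace = (ε : ℂ) ^ expo x * ∏ q, ((M : ℂ) + N * ((cycleSign x q : ℤ) : ℂ)) := by
  have hfix {b : TIdx M N n} (hb : b ∈ ({b | b = fun i => b (x.2⁻¹ i)} : Finset _)) :
      signFactor x b = ∏ i, if (b i).isRight then ((x.1 i : ℤ) : ℂ) else 1 :=
    prod_congr rfl fun i _ => by rw [← congrFun (mem_filter.1 hb).2 i]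
  have hdiag : (rep M N ε x).trace
      = ∑ b : TIdx M N n with b = (fun i => b (x.2⁻¹ i)), (ε : ℂ) ^ expo x * signFactor x b := by
    rw [Matrix.trace, sum_filter]
    rfl
  rw [hdiag, ← mul_sum, sum_congr rfl fun b hb => hfix hb,
    sum_invariant_prod_eq_prod_cycles x.2
      fun i (v : Fin M ⊕ Fin N) => if v.isRight then ((x.1 i : ℤ) : ℂ) else 1]
  congr 1
  refine prod_congr rfl fun q _ => ?_
  rw [sum_prod_ite_isRight, cycleSign]
  push_cast
  rfl

theorem trace_rep (x : WB n) :
    (rep M N ε x).trace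
      = (ε : ℂ) ^ expo x * ((M - N : ℂ) ^ negCyc x * (M + N : ℂ) ^ (cycCount x.2 - negCyc x)) := by
  have hterm (q : Cycles x.2) : (M : ℂ) + N * ((cycleSign x q : ℤ) : ℂ)
      = if cycleSign x q = -1 then (M - N : ℂ) else M + N := by
    rcases Int.units_eq_one_or (cycleSign x q) with h | h <;> simp [h, sub_eq_add_neg]
  rw [trace_rep_eq_prod_cycles, prod_congr rfl fun q _ => hterm q, prod_ite, prod_const,
    prod_const, negCyc_eq_card_cycleSign, cycCount_eq_card_cycles, ← card_univ,
    ← card_filter_add_card_filter_not (s := univ) fun q => cycleSign x q = -1,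
    Nat.add_sub_cancel_left]

end Representation

/-- ω_n is a representation of B(n) on V^{⊗n} and its normalized character
is the signed reflection function φ_{q₊,q₋}(g) = q₊^{‖ρ⁺‖+‖ρ⁻‖} q₋^{ℓ(ρ⁻)} with
q₊ = ε/(M+N) and q₋ = (M−N)/(M+N). -/
theorem schur_weyl_typeB (M N : ℕ) (hMN : 1 ≤ M + N) (ε : ℤ) (hε : ε = 1 ∨ ε = -1)
    (n : ℕ) :
    -- ω_n is multiplicative and unital, i.e. a representation of B(n) = ℤ₂ ≀ S_n
    (∀ x y : WB n, rep M N ε (wmul x y) = rep M N ε x * rep M N ε y) ∧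
    rep M N ε (wone n) = 1 ∧
    -- and its normalized character is φ_{q₊,q₋}
    (∀ x : WB n,
      (rep M N ε x).trace / (rep M N ε (wone n)).trace
        = ((ε : ℂ) / ((M : ℂ) + (N : ℂ))) ^ expo x *
            (((M : ℂ) - (N : ℂ)) / ((M : ℂ) + (N : ℂ))) ^ negCyc x) := by
  refine ⟨rep_wmul hε, rep_wone, fun x => ?_⟩
  have hdim : (M : ℂ) + N ≠ 0 := by exact_mod_cast (by omega : M + N ≠ 0)
  have hdim_pow : ((M : ℂ) + N) ^ n
      = (M + N) ^ expo x * (M + N) ^ negCyc x * (M + N) ^ (cycCount x.2 - negCyc x) := by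
    have := negCyc_le_cycCount x
    have := expo_add_cycCount x
    rw [← pow_add, ← pow_add, show expo x + negCyc x + (cycCount x.2 - negCyc x) = n by omega]
  rw [trace_rep, rep_wone, Matrix.trace_one, Fintype.card_fun, Fintype.card_sum, Fintype.card_fin,
    Fintype.card_fin, Fintype.card_fin]
  push_cast
  rw [hdim_pow, div_pow, div_pow]
  field_simp

end TypeB
end
end

section
/- For every n ≥ 1, the symmetrization operator on K_n satisfies the decomposition P^{(n)}_{q₊,q₋} = (id ⊗ P^{(n−1)}_{q₊,q₋} ⊗ id) ∘ R^{(n)}_{q₊,q₋}, where R^{(n)}_{q₊,q₋} = id + q₋·J_n⁻ + q₊·J_n⁺ with J_n⁺ = Σ_{j ∈ [±(n−1)]} (j n)(−j −n) and J_n⁻ = (−n n) acting on K_n by permuting tensor factors, and id ⊗ P^{(n−1)}_{q₊,q₋} ⊗ id denotes P^{(n−1)}_{q₊,q₋} acting on the tensor factors indexed by [±(n−1)] with the identity on the factors indexed by −n and n. -/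
open scoped ComplexOrder

noncomputable section

namespace TypeB

/-- The classification set of parameters (Theorem 1.1). -/
def ClassSet (qp qm : ℂ) : Prop :=
  (∃ (M N : ℕ) (ε : ℤ), (ε = 1 ∨ ε = -1) ∧ M + N ≠ 0 ∧
      qp = (ε : ℂ) / ((M : ℂ) + (N : ℂ)) ∧
      qm = ((M : ℂ) - (N : ℂ)) / ((M : ℂ) + (N : ℂ))) ∨
  (qp = 0 ∧ ∃ r : ℝ, qm = (r : ℂ) ∧ -1 ≤ r ∧ r ≤ 1)

/-- The index set [±n] of the 2n tensor factors of K_n. -/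
abbrev SIdx (n : ℕ) := {i : ℤ // i ≠ 0 ∧ |i| ≤ (n : ℤ)}

instance (n : ℕ) : Fintype (SIdx n) :=
  Fintype.subtype ((Finset.Icc (-(n : ℤ)) (n : ℤ)).erase 0)
    (by intro x; simp [Finset.mem_erase, Finset.mem_Icc, abs_le])

/-- H: the complexification of the real Hilbert space with orthonormal basis α. -/
abbrev Hsp (α : Type*) := α →₀ ℂ

/-- K_n = H^{⊗2n}, with basis indexed by functions [±n] → α. -/
abbrev Ksp (α : Type*) (n : ℕ) := (SIdx n → α) →₀ ℂ

/-- The inner product of H (antilinear on the left). -/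
def innerH {α : Type*} (x y : Hsp α) : ℂ :=
  y.sum fun a c => (starRingEnd ℂ) (x a) * c

/-- The free inner product ⟨·,·⟩₀,₀ on K_n (antilinear on the left); on simple tensors
it is the product of the inner products of the factors. -/
def inner00 {α : Type*} {n : ℕ} (F G : Ksp α n) : ℂ :=
  F.sum fun v c => (starRingEnd ℂ) c * G v

open Classical in
/-- The restriction of σ : Perm ℤ to [±n] (junk value 1 if σ does not preserve [±n];
elements of B(n) do preserve it). -/
def permRestrict (n : ℕ) (σ : Equiv.Perm ℤ) : Equiv.Perm (SIdx n) :=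
  if h : ∀ i : ℤ, (i ≠ 0 ∧ |i| ≤ (n : ℤ)) ↔ (σ i ≠ 0 ∧ |σ i| ≤ (n : ℤ)) then
    Equiv.Perm.subtypePerm σ (fun i => (h i).symm) else 1

/-- The action of σ ∈ B(n) on K_n permuting the tensor factors:
x_{−n}⊗…⊗x_n ↦ x_{σ(−n)}⊗…⊗x_{σ(n)}. -/
def act (α : Type*) [DecidableEq α] (n : ℕ) (σ : Equiv.Perm ℤ) :
    Ksp α n →ₗ[ℂ] Ksp α n :=
  Finsupp.lmapDomain ℂ ℂ (fun v : SIdx n → α => v ∘ (permRestrict n σ))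

/-- The type-B symmetrization operator P^{(n)}_{q₊,q₋} = Σ_{σ∈B(n)} φ_{q₊,q₋}(σ)·σ. -/
def Pop (α : Type*) [DecidableEq α] (n : ℕ) (qp qm : ℂ) : Ksp α n →ₗ[ℂ] Ksp α n :=
  ∑ᶠ σ ∈ Bset n, phi qp qm σ • act α n σ

/-- The deformed (semi-)inner product ⟨ξ,η⟩_{q₊,q₋} = ⟨ξ, P^{(n)} η⟩₀,₀ on K_n. -/
def innerQ (α : Type*) [DecidableEq α] (n : ℕ) (qp qm : ℂ) (F G : Ksp α n) : ℂ :=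
  inner00 F (Pop α n qp qm G)

/-- R^{(n)}_{q₊,q₋} = id + q₋·J_n⁻ + q₊·J_n⁺. -/
def Rop (α : Type*) [DecidableEq α] (n : ℕ) (qp qm : ℂ) : Ksp α n →ₗ[ℂ] Ksp α n :=
  LinearMap.id
    + qm • act α n (Equiv.swap (-(n : ℤ)) (n : ℤ))
    + qp • ∑ j ∈ (Finset.Icc (-(n : ℤ) + 1) ((n : ℤ) - 1)).erase 0,
        act α n (Equiv.swap j (n : ℤ) * Equiv.swap (-j) (-(n : ℤ)))

/-- The inclusion [±n] ⊆ [±(n+1)]. -/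
def castIdx {n : ℕ} (i : SIdx n) : SIdx (n + 1) :=
  ⟨i.1, i.2.1, i.2.2.trans (by push_cast; omega)⟩

/-- The position −(n+1) in [±(n+1)]. -/
def negEnd (n : ℕ) : SIdx (n + 1) :=
  ⟨-((n : ℤ) + 1), by refine ⟨by omega, ?_⟩; rw [abs_le]; constructor <;> omega⟩

/-- The position n+1 in [±(n+1)]. -/
def posEnd (n : ℕ) : SIdx (n + 1) :=
  ⟨(n : ℤ) + 1, by refine ⟨by omega, ?_⟩; rw [abs_le]; constructor <;> omega⟩

/-- Restriction of a basis index of K_{n+1} to the middle factors [±n]. -/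
def downFn {α : Type*} {n : ℕ} (v : SIdx (n + 1) → α) : SIdx n → α :=
  fun i => v (castIdx i)

open Classical in
/-- Extension of a basis index of K_n by values a at position −(n+1) and b at n+1. -/
def upFn {α : Type*} {n : ℕ} (w : SIdx n → α) (a b : α) : SIdx (n + 1) → α :=
  fun i => if h : i.1 ≠ 0 ∧ |i.1| ≤ (n : ℤ) then w ⟨i.1, h⟩
           else if i.1 < 0 then a else b

/-- id ⊗ T ⊗ id: the operator T on K_n acting on the middle 2n tensor factors of
K_{n+1}, with the identity on the factors at positions −(n+1) and n+1. -/
def embedMid (α : Type*) [DecidableEq α] (n : ℕ) (T : Ksp α n →ₗ[ℂ] Ksp α n) :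
    Ksp α (n + 1) →ₗ[ℂ] Ksp α (n + 1) :=
  Finsupp.lsum ℂ fun v : SIdx (n + 1) → α =>
    LinearMap.toSpanSingleton ℂ _
      (Finsupp.mapDomain (fun w : SIdx n → α => upFn w (v (negEnd n)) (v (posEnd n)))
        (T (Finsupp.single (downFn v) 1)))

/-- The left-right creation operator b*(x⊗y) : K_n → K_{n+1}: it tensors x at the
leftmost position −(n+1) and y at the rightmost position n+1. -/
def bstar (α : Type*) [DecidableEq α] (n : ℕ) (x y : Hsp α) :
    Ksp α n →ₗ[ℂ] Ksp α (n + 1) :=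
  Finsupp.lsum ℂ fun w : SIdx n → α =>
    LinearMap.toSpanSingleton ℂ _
      (x.sum fun a xa => y.sum fun b yb => Finsupp.single (upFn w a b) (xa * yb))

/-- The free annihilation operator b(x⊗y) : K_{n+1} → K_n, the ⟨·,·⟩₀,₀-adjoint of
b*(x⊗y):  x_{−(n+1)}⊗…⊗x_{n+1} ↦ ⟨x,x_{−(n+1)}⟩⟨y,x_{n+1}⟩·x_{−n}⊗…⊗x_n. -/
def bfree (α : Type*) [DecidableEq α] (n : ℕ) (x y : Hsp α) :
    Ksp α (n + 1) →ₗ[ℂ] Ksp α n :=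
  Finsupp.lsum ℂ fun v : SIdx (n + 1) → α =>
    LinearMap.toSpanSingleton ℂ _
      (((starRingEnd ℂ) (x (v (negEnd n))) * (starRingEnd ℂ) (y (v (posEnd n)))) •
        Finsupp.single (downFn v) (1 : ℂ))

/-!
Every `σ ∈ B(n)` factors uniquely as `σ = e_k * σ'` with `k = σ n ∈ [±n]` and `σ' ∈ B(n-1)`,
where `e_n = 1`, `e_{-n} = (-n n)` and `e_k = (k n)(-k -n)` otherwise. Left multiplication by
`e_k` inserts the fixed points `±n` of `σ'` into its cycles: `e_{-n}` creates the self-negative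
cycle `{-n, n}` (a factor `q₋`), while `e_k` puts `n` into the cycle of `k` and `-n` into that
of `-k`, lengthening either a mirror pair of cycles by one each or a self-negative cycle by two;
either way `‖ρ⁺‖ + ‖ρ⁻‖` grows by one (a factor `q₊`). So `φ(e_k σ') = w_k φ(σ')`, and since
permuting tensor factors is a right action, summing over the factorisation gives
`P⁽ⁿ⁾ = (Σ φ(σ') σ') ∘ (Σ w_k e_k) = (id ⊗ P⁽ⁿ⁻¹⁾ ⊗ id) ∘ R⁽ⁿ⁾`.
-/

open Equiv Equiv.Perm

section Cycles

variable {X : Type*} {f : Perm X} {R : X → X → Prop} {a p x y : X}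

theorem SameCycle.rel_of_equivalence (hR : Equivalence R) (hstep : ∀ x, R x (f x))
    (h : f.SameCycle x y) : R x y := by
  obtain ⟨i, rfl⟩ := h
  refine zpow_induction_left (P := fun g : Perm X => R x (g x)) (hR.refl x)
    (fun g hg => hR.trans hg (hstep _)) (fun g hg => hR.trans hg (hR.symm ?_)) i
  simpa using hstep (f⁻¹ (g x))

def cycleSet (f : Perm X) (x : X) : Set X := {y | f.SameCycle x y}

theorem mem_cycleSet : y ∈ cycleSet f x ↔ f.SameCycle x y := Iff.rfl

theorem mem_cycleSet_self (f : Perm X) (x : X) : x ∈ cycleSet f x := SameCycle.refl f x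

theorem cycleSet_eq_of_sameCycle (h : f.SameCycle x y) : cycleSet f x = cycleSet f y :=
  Set.ext fun _ => ⟨h.symm.trans, h.trans⟩

theorem cycleSet_of_apply_eq (hx : f x = x) : cycleSet f x = {x} :=
  Set.ext fun _ => ⟨fun h => (h.eq_of_left hx).symm, fun h => h ▸ SameCycle.refl f x⟩

def orbitSum {M : Type*} [AddCommMonoid M] (w : Set X → M) (f : Perm X) : M :=
  ∑ᶠ O ∈ ntOrbits f, w O

theorem notMem_cycleSet_of_apply_eq (hp : f p = p) (hx : x ≠ p) : p ∉ cycleSet f x :=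
  fun h => hx (h.eq_of_right hp)

theorem ntOrbits_eq (f : Perm X) : ntOrbits f = {O | ∃ x, f x ≠ x ∧ O = cycleSet f x} := rfl

theorem apply_ne_of_mem_ntOrbits {O : Set X} (hO : O ∈ ntOrbits f) (hx : x ∈ O) : f x ≠ x := by
  obtain ⟨i, hi, rfl⟩ := hO
  exact fun h => hi ((SameCycle.apply_eq_self_iff hx).2 h)

theorem ntOrbits_finite_s8 (hf : {x | f x ≠ x}.Finite) : (ntOrbits f).Finite :=
  hf.finite_subsets.subset fun _ hO _ hx => apply_ne_of_mem_ntOrbits hO hx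

theorem cycleSet_finite (hf : {x | f x ≠ x}.Finite) (x : X) : (cycleSet f x).Finite := by
  by_cases hx : f x = x
  · rw [cycleSet_of_apply_eq hx]; exact Set.finite_singleton x
  · exact hf.subset fun _ hy => apply_ne_of_mem_ntOrbits ⟨x, hx, rfl⟩ hy

theorem ncard_cycleSet_pos (hf : {x | f x ≠ x}.Finite) (x : X) : 0 < (cycleSet f x).ncard :=
  (Set.ncard_pos (cycleSet_finite hf x)).2 ⟨x, mem_cycleSet_self f x⟩

theorem ncard_insert_cycleSet (hf : {x | f x ≠ x}.Finite) (hp : f p = p) (hx : x ≠ p) :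
    (insert p (cycleSet f x)).ncard = (cycleSet f x).ncard + 1 :=
  Set.ncard_insert_of_notMem (notMem_cycleSet_of_apply_eq hp hx) (cycleSet_finite hf x)

theorem mem_insert_cycleSet_of_sameCycle (hp : f p = p) (hxy : f.SameCycle x y)
    (hx : x ∈ insert p (cycleSet f a)) : y ∈ insert p (cycleSet f a) := by
  rcases hx with rfl | hx
  · exact Or.inl (hxy.eq_of_left hp).symm
  · exact Or.inr (SameCycle.trans hx hxy)

end Cycles

section InsertFixedPoint

variable {X : Type*} [DecidableEq X] {f : Perm X} {a p x y : X}

theorem swap_mul_apply_of_apply_eq_left (hx : f x = a) : (swap a p * f) x = p := by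
  rw [mul_apply, hx, swap_apply_left]

theorem swap_mul_apply_of_fixed (hp : f p = p) : (swap a p * f) p = a := by
  rw [mul_apply, hp, swap_apply_right]

theorem swap_mul_apply_of_notMem (hp : f p = p) (hx : x ∉ insert p (cycleSet f a)) :
    (swap a p * f) x = f x := by
  refine swap_apply_of_ne_of_ne (fun h => hx (Or.inr ?_)) (fun h => hx (Or.inl ?_))
  · exact (SameCycle.symm ⟨1, by simpa using h⟩ : f.SameCycle a x)
  · exact f.injective (h.trans hp.symm)

theorem sameCycle_swap_mul_of_sameCycle (hp : f p = p) (h : f.SameCycle x y) :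
    (swap a p * f).SameCycle x y := by
  refine SameCycle.rel_of_equivalence (SameCycle.equivalence _) (fun x => ?_) h
  by_cases hxa : f x = a
  · refine ⟨2, ?_⟩
    rw [zpow_two, mul_apply, swap_mul_apply_of_apply_eq_left hxa, swap_mul_apply_of_fixed hp, hxa]
  by_cases hxp : f x = p
  · rw [f.injective (hxp.trans hp.symm), hp]
  · exact ⟨1, by rw [zpow_one, mul_apply, swap_apply_of_ne_of_ne hxa hxp]⟩

theorem insert_cycleSet_subset_swap_mul (hp : f p = p) :
    insert p (cycleSet f a) ⊆ cycleSet (swap a p * f) a := by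
  rintro y (rfl | hy)
  · exact SameCycle.symm (⟨1, by rw [zpow_one, swap_mul_apply_of_fixed hp]⟩ :
      (swap a y * f).SameCycle y a)
  · exact sameCycle_swap_mul_of_sameCycle hp hy

theorem sameCycle_swap_mul_iff (hp : f p = p) :
    (swap a p * f).SameCycle x y ↔
      f.SameCycle x y ∨ (x ∈ insert p (cycleSet f a) ∧ y ∈ insert p (cycleSet f a)) := by
  set I := insert p (cycleSet f a)
  constructor
  · refine SameCycle.rel_of_equivalence (R := fun x y => f.SameCycle x y ∨ (x ∈ I ∧ y ∈ I))
      ⟨fun x => Or.inl (SameCycle.refl f x), ?_, ?_⟩ ?_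
    · rintro x y (h | ⟨hx, hy⟩)
      exacts [Or.inl h.symm, Or.inr ⟨hy, hx⟩]
    · rintro x y z (hxy | ⟨hx, hy⟩) (hyz | ⟨hy', hz⟩)
      · exact Or.inl (hxy.trans hyz)
      · exact Or.inr ⟨mem_insert_cycleSet_of_sameCycle hp hxy.symm hy', hz⟩
      · exact Or.inr ⟨hx, mem_insert_cycleSet_of_sameCycle hp hyz hy⟩
      · exact Or.inr ⟨hx, hz⟩
    · intro x
      by_cases hxa : f x = a
      · rw [swap_mul_apply_of_apply_eq_left hxa]
        exact Or.inr ⟨Or.inr (SameCycle.symm ⟨1, by simpa using hxa⟩), Or.inl rfl⟩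
      by_cases hxp : f x = p
      · obtain rfl := f.injective (hxp.trans hp.symm)
        rw [swap_mul_apply_of_fixed hp]
        exact Or.inr ⟨Or.inl rfl, Or.inr (SameCycle.refl f a)⟩
      · rw [mul_apply, swap_apply_of_ne_of_ne hxa hxp]
        exact Or.inl ⟨1, by simp⟩
  · rintro (h | ⟨hx, hy⟩)
    · exact sameCycle_swap_mul_of_sameCycle hp h
    · exact (insert_cycleSet_subset_swap_mul hp hx).symm.trans
        (insert_cycleSet_subset_swap_mul hp hy)

theorem cycleSet_swap_mul_of_mem (hp : f p = p) (hx : x ∈ insert p (cycleSet f a)) :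
    cycleSet (swap a p * f) x = insert p (cycleSet f a) :=
  Set.ext fun _ => (sameCycle_swap_mul_iff hp).trans
    ⟨fun h => h.elim (fun h => mem_insert_cycleSet_of_sameCycle hp h hx) And.right,
      fun hy => Or.inr ⟨hx, hy⟩⟩

theorem cycleSet_swap_mul_of_notMem (hp : f p = p) (hx : x ∉ insert p (cycleSet f a)) :
    cycleSet (swap a p * f) x = cycleSet f x :=
  Set.ext fun _ => (sameCycle_swap_mul_iff hp).trans (or_iff_left fun h => hx h.1)

theorem ntOrbits_swap_mul (hp : f p = p) (hap : a ≠ p) :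
    ntOrbits (swap a p * f) = insert (insert p (cycleSet f a)) (ntOrbits f \ {cycleSet f a}) := by
  ext O
  rw [ntOrbits_eq, ntOrbits_eq]
  constructor
  · rintro ⟨x, hx, rfl⟩
    by_cases hxI : x ∈ insert p (cycleSet f a)
    · exact Or.inl (cycleSet_swap_mul_of_mem hp hxI)
    · rw [swap_mul_apply_of_notMem hp hxI] at hx
      rw [cycleSet_swap_mul_of_notMem hp hxI]
      refine Or.inr ⟨⟨x, hx, rfl⟩, fun h => hxI (Or.inr ?_)⟩
      exact (Set.mem_singleton_iff.1 h) ▸ mem_cycleSet_self f x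
  · rintro (rfl | ⟨⟨x, hx, rfl⟩, hne⟩)
    · exact ⟨p, by rwa [swap_mul_apply_of_fixed hp],
        (cycleSet_swap_mul_of_mem hp (Or.inl rfl)).symm⟩
    · have hxI : x ∉ insert p (cycleSet f a) := by
        rintro (rfl | hax)
        exacts [hx hp, hne (cycleSet_eq_of_sameCycle hax).symm]
      exact ⟨x, by rwa [swap_mul_apply_of_notMem hp hxI], (cycleSet_swap_mul_of_notMem hp hxI).symm⟩

theorem orbitSum_swap_mul {M : Type*} [AddCommMonoid M] (w : Set X → M) (hp : f p = p)
    (hap : a ≠ p) (hf : (ntOrbits f).Finite) (hw : f a = a → w {a} = 0) :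
    orbitSum w (swap a p * f) + w (cycleSet f a)
      = orbitSum w f + w (insert p (cycleSet f a)) := by
  have hI : insert p (cycleSet f a) ∉ ntOrbits f \ {cycleSet f a} := fun h =>
    apply_ne_of_mem_ntOrbits h.1 (Set.mem_insert p _) hp
  rw [orbitSum, orbitSum, ntOrbits_swap_mul hp hap, finsum_mem_insert _ hI hf.sdiff, add_assoc,
    add_comm (∑ᶠ O ∈ ntOrbits f, w O)]
  congr 1
  by_cases ha : f a = a
  · have hC : cycleSet f a ∉ ntOrbits f := fun h =>
      apply_ne_of_mem_ntOrbits h (mem_cycleSet_self f a) ha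
    rw [Set.sdiff_singleton_eq_self hC, cycleSet_of_apply_eq ha, hw ha, add_zero]
  · have hC : cycleSet f a ∈ ntOrbits f := ⟨a, ha, rfl⟩
    have hC' : cycleSet f a ∉ ntOrbits f \ {cycleSet f a} := fun h => h.2 rfl
    rw [add_comm, ← finsum_mem_insert w hC' hf.sdiff, Set.insert_sdiff_singleton,
      Set.insert_eq_of_mem hC]

end InsertFixedPoint

namespace Bset

variable {m : ℕ} {σ τ : Perm ℤ} {i : ℤ}

theorem one_mem (m : ℕ) : (1 : Perm ℤ) ∈ Bset m := ⟨fun _ => rfl, fun _ _ => rfl⟩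

theorem mul_mem (hσ : σ ∈ Bset m) (hτ : τ ∈ Bset m) : σ * τ ∈ Bset m :=
  ⟨fun i => by rw [mul_apply, mul_apply, hτ.1, hσ.1],
    fun i hi => by rw [mul_apply, hτ.2 i hi, hσ.2 i hi]⟩

theorem mono {n : ℕ} (hmn : m ≤ n) : Bset m ⊆ Bset n :=
  fun _ hσ => ⟨hσ.1, fun i hi => hσ.2 i (by omega)⟩

theorem apply_zero (hσ : σ ∈ Bset m) : σ 0 = 0 := by
  have := hσ.1 0
  rw [neg_zero] at this
  omega

theorem apply_succ (hσ : σ ∈ Bset m) : σ ((m : ℤ) + 1) = (m : ℤ) + 1 :=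
  hσ.2 _ (by rw [abs_of_pos (by omega)]; omega)

theorem apply_neg_succ (hσ : σ ∈ Bset m) : σ (-((m : ℤ) + 1)) = -((m : ℤ) + 1) := by
  rw [hσ.1, apply_succ hσ]

theorem of_apply_succ (hσ : σ ∈ Bset (m + 1)) (hfix : σ ((m : ℤ) + 1) = (m : ℤ) + 1) :
    σ ∈ Bset m := by
  refine ⟨hσ.1, fun i hi => ?_⟩
  rcases lt_or_ge ((m : ℤ) + 1) |i| with h | h
  · exact hσ.2 i (by push_cast; exact h)
  · obtain rfl | rfl : i = (m : ℤ) + 1 ∨ i = -((m : ℤ) + 1) := by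
      rcases abs_cases i with ⟨h1, -⟩ | ⟨h1, -⟩ <;> omega
    · exact hfix
    · rw [hσ.1, hfix]

theorem mapsTo_SIdx (hσ : σ ∈ Bset m) (i : ℤ) :
    (i ≠ 0 ∧ |i| ≤ (m : ℤ)) ↔ (σ i ≠ 0 ∧ |σ i| ≤ (m : ℤ)) := by
  have h0 : σ i = 0 ↔ i = 0 :=
    ⟨fun h => σ.injective (h.trans (apply_zero hσ).symm), fun h => h ▸ apply_zero hσ⟩
  constructor
  · rintro ⟨hi0, hi⟩
    refine ⟨mt h0.1 hi0, not_lt.1 fun hlt => ?_⟩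
    rw [σ.injective (hσ.2 _ hlt)] at hlt
    omega
  · rintro ⟨hi0, hi⟩
    refine ⟨mt h0.2 hi0, not_lt.1 fun hlt => ?_⟩
    rw [hσ.2 _ hlt] at hi
    omega

theorem support_finite (hσ : σ ∈ Bset m) : {x | σ x ≠ x}.Finite :=
  (Set.finite_Icc (-(m : ℤ)) m).subset fun x hx =>
    abs_le.1 (not_lt.1 fun hlt => hx (hσ.2 x hlt))

theorem sameCycle_neg_iff (hσ : σ ∈ Bset m) {x y : ℤ} :
    σ.SameCycle (-x) (-y) ↔ σ.SameCycle x y := by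
  have hconj : Equiv.neg ℤ * σ * (Equiv.neg ℤ)⁻¹ = σ := by
    ext i
    simp [hσ.1]
  conv_rhs => rw [← hconj]
  rw [sameCycle_conj]
  simp

theorem negSet_cycleSet (hσ : σ ∈ Bset m) (x : ℤ) :
    negSet (cycleSet σ x) = cycleSet σ (-x) := by
  ext y
  rw [negSet, Set.image_neg_eq_neg, Set.mem_neg, mem_cycleSet, mem_cycleSet,
    ← sameCycle_neg_iff hσ, neg_neg]

end Bset

theorem finsum_mem_sep_eq_finsum_mem_ite {ι M : Type*} [AddCommMonoid M] (s : Set ι) (p : ι → Prop)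
    [DecidablePred p] (f : ι → M) :
    ∑ᶠ x ∈ {x ∈ s | p x}, f x = ∑ᶠ x ∈ s, if p x then f x else 0 := by
  simp only [finsum_mem_def]
  congr 1
  ext x
  by_cases hs : x ∈ s <;> by_cases hp : p x <;> simp [Set.indicator, hs, hp]

section Weights

open Classical

def posWeight (O : Set ℤ) : ℕ := if negSet O ≠ O then O.ncard - 1 else 0

def negWeight (O : Set ℤ) : ℕ := if negSet O = O then O.ncard / 2 - 1 else 0

def negIndicator (O : Set ℤ) : ℕ := if negSet O = O then 1 else 0

theorem expPlus_eq_orbitSum (σ : Perm ℤ) :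
    expPlus σ = orbitSum posWeight σ / 2 + orbitSum negWeight σ := by
  simp only [expPlus, orbitSum, posOrbits, negOrbits, finsum_mem_sep_eq_finsum_mem_ite, posWeight,
    negWeight]

theorem negCount_eq_orbitSum (σ : Perm ℤ) : negCount σ = orbitSum negIndicator σ := by
  rw [negCount, ← finsum_one, negOrbits, finsum_mem_sep_eq_finsum_mem_ite]
  rfl

theorem weights_of_negSet_eq {O : Set ℤ} (h : negSet O = O) :
    posWeight O = 0 ∧ negWeight O = O.ncard / 2 - 1 ∧ negIndicator O = 1 := by
  simp [posWeight, negWeight, negIndicator, h]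

theorem weights_of_negSet_ne {O : Set ℤ} (h : negSet O ≠ O) :
    posWeight O = O.ncard - 1 ∧ negWeight O = 0 ∧ negIndicator O = 0 := by
  simp [posWeight, negWeight, negIndicator, h]

end Weights

theorem negSet_insert (x : ℤ) (s : Set ℤ) : negSet (insert x s) = insert (-x) (negSet s) :=
  Set.image_insert_eq

theorem negSet_ne_of_mem_of_notMem {O : Set ℤ} {x : ℤ} (hx : -x ∈ O) (hx' : x ∉ O) :
    negSet O ≠ O :=
  ne_of_mem_of_not_mem' (show x ∈ negSet O from ⟨-x, hx, neg_neg x⟩) hx'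

theorem negSet_singleton_ne {x : ℤ} (hx : x ≠ 0) : negSet {x} ≠ {x} :=
  negSet_ne_of_mem_of_notMem (x := -x) (by rw [neg_neg]; rfl) (by simp; omega)

theorem phi_eq_of_orbitSum {qp qm : ℂ} {σ τ : Perm ℤ} {a b c : ℕ}
    (hpos : orbitSum posWeight σ = orbitSum posWeight τ + 2 * a)
    (hneg : orbitSum negWeight σ = orbitSum negWeight τ + b)
    (hind : orbitSum negIndicator σ = orbitSum negIndicator τ + c) :
    phi qp qm σ = qp ^ (a + b) * qm ^ c * phi qp qm τ := by
  rw [phi, phi, expPlus_eq_orbitSum, expPlus_eq_orbitSum, negCount_eq_orbitSum,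
    negCount_eq_orbitSum, hpos, hneg, hind,
    show (orbitSum posWeight τ + 2 * a) / 2 + (orbitSum negWeight τ + b)
      = (orbitSum posWeight τ / 2 + orbitSum negWeight τ) + (a + b) by omega]
  ring

theorem weights_singleton {x : ℤ} (hx : x ≠ 0) :
    posWeight {x} = 0 ∧ negWeight {x} = 0 ∧ negIndicator {x} = 0 := by
  obtain ⟨h1, h2, h3⟩ := weights_of_negSet_ne (negSet_singleton_ne hx)
  rw [Set.ncard_singleton] at h1
  exact ⟨h1, h2, h3⟩

section PhiCosets

variable {m : ℕ} {σ : Perm ℤ} {j : ℤ} {qp qm : ℂ}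

theorem phi_swap_neg_mul (hσ : σ ∈ Bset m) :
    phi qp qm (swap (-((m : ℤ) + 1)) ((m : ℤ) + 1) * σ) = qm * phi qp qm σ := by
  set n : ℤ := (m : ℤ) + 1
  have key : ∀ w : Set ℤ → ℕ, w {-n} = 0 →
      orbitSum w (swap (-n) n * σ) = orbitSum w σ + w {n, -n} := by
    intro w hw
    have := orbitSum_swap_mul w (Bset.apply_succ hσ) (by omega)
      (ntOrbits_finite_s8 (Bset.support_finite hσ)) fun _ => hw
    rwa [cycleSet_of_apply_eq (Bset.apply_neg_succ hσ), hw, add_zero] at this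
  have hsingle := weights_singleton (show -n ≠ 0 by omega)
  have hpair := weights_of_negSet_eq (show negSet {n, -n} = {n, -n} by
    rw [negSet_insert, negSet, Set.image_singleton, neg_neg, Set.pair_comm])
  rw [Set.ncard_pair (by omega)] at hpair
  refine (phi_eq_of_orbitSum (τ := σ) (a := 0) (b := 0) (c := 1) ?_ ?_ ?_).trans (by simp)
  · rw [key _ hsingle.1, hpair.1]
  · rw [key _ hsingle.2.1, hpair.2.1]
  · rw [key _ hsingle.2.2, hpair.2.2]

theorem orbitSum_swapPair_mul (hσ : σ ∈ Bset m) (hj0 : j ≠ 0) (hjm : |j| ≤ m)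
    (w : Set ℤ → ℕ) (hw : ∀ x : ℤ, x ≠ 0 → w {x} = 0) :
    orbitSum w (swap j ((m : ℤ) + 1) * (swap (-j) (-((m : ℤ) + 1)) * σ))
        + w (cycleSet σ (-j)) + w (cycleSet (swap (-j) (-((m : ℤ) + 1)) * σ) j)
      = orbitSum w σ + w (insert (-((m : ℤ) + 1)) (cycleSet σ (-j)))
        + w (insert ((m : ℤ) + 1) (cycleSet (swap (-j) (-((m : ℤ) + 1)) * σ) j)) := by
  have hj := abs_le.1 hjm
  have hfin := ntOrbits_finite_s8 (Bset.support_finite hσ)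
  have hμn : (swap (-j) (-((m : ℤ) + 1)) * σ) ((m : ℤ) + 1) = (m : ℤ) + 1 := by
    rw [mul_apply, Bset.apply_succ hσ, swap_apply_of_ne_of_ne (by omega) (by omega)]
  have hμfin : (ntOrbits (swap (-j) (-((m : ℤ) + 1)) * σ)).Finite := by
    rw [ntOrbits_swap_mul (Bset.apply_neg_succ hσ) (by omega)]
    exact hfin.sdiff.insert _
  have h1 := orbitSum_swap_mul w (Bset.apply_neg_succ hσ) (by omega) hfin
    fun _ => hw (-j) (neg_ne_zero.2 hj0)
  have h2 := orbitSum_swap_mul w hμn (by omega) hμfin fun _ => hw _ hj0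
  omega

theorem phi_swapPair_mul_of_sameCycle (hσ : σ ∈ Bset m) (hj0 : j ≠ 0) (hjm : |j| ≤ m)
    (hj : σ.SameCycle j (-j)) :
    phi qp qm (swap j ((m : ℤ) + 1) * (swap (-j) (-((m : ℤ) + 1)) * σ)) = qp * phi qp qm σ := by
  have hjabs := abs_le.1 hjm
  have key := orbitSum_swapPair_mul hσ hj0 hjm
  have hμj := cycleSet_swap_mul_of_mem (Bset.apply_neg_succ hσ)
    (show j ∈ insert _ (cycleSet σ (-j)) from Or.inr hj.symm)
  simp only [hμj, ← cycleSet_eq_of_sameCycle hj] at key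
  set n : ℤ := (m : ℤ) + 1
  set C := cycleSet σ j
  have hfin := Bset.support_finite hσ
  have hCsym : negSet C = C := by
    rw [Bset.negSet_cycleSet hσ]
    exact (cycleSet_eq_of_sameCycle hj).symm
  have hnI : n ∉ insert (-n) C := fun h => (Set.mem_insert_iff.1 h).elim (by omega)
    (notMem_cycleSet_of_apply_eq (Bset.apply_succ hσ) (by omega))
  have hC2 : 2 ≤ C.ncard := by
    rw [← Set.ncard_pair (show j ≠ -j by omega)]
    refine Set.ncard_le_ncard ?_ (cycleSet_finite hfin j)
    rintro x (rfl | rfl)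
    exacts [mem_cycleSet_self σ x, hj]
  have hcard₂ : (insert (-n) C).ncard = C.ncard + 1 :=
    ncard_insert_cycleSet hfin (Bset.apply_neg_succ hσ) (by omega)
  have hcard₁ : (insert n (insert (-n) C)).ncard = C.ncard + 2 := by
    rw [Set.ncard_insert_of_notMem hnI ((cycleSet_finite hfin j).insert _), hcard₂]
  obtain ⟨pC, nC, iC⟩ := weights_of_negSet_eq hCsym
  obtain ⟨p₂, n₂, i₂⟩ := weights_of_negSet_ne (negSet_ne_of_mem_of_notMem (Set.mem_insert _ _) hnI)
  obtain ⟨p₁, n₁, i₁⟩ := weights_of_negSet_eq (show negSet (insert n (insert (-n) C))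
      = insert n (insert (-n) C) by
    rw [negSet_insert, negSet_insert, hCsym, neg_neg, Set.insert_comm])
  refine (phi_eq_of_orbitSum (τ := σ) (a := 0) (b := 1) (c := 0) ?_ ?_ ?_).trans (by ring)
  · have := key posWeight fun x hx => (weights_singleton hx).1
    omega
  · have := key negWeight fun x hx => (weights_singleton hx).2.1
    omega
  · have := key negIndicator fun x hx => (weights_singleton hx).2.2
    omega

theorem phi_swapPair_mul_of_not_sameCycle (hσ : σ ∈ Bset m) (hj0 : j ≠ 0) (hjm : |j| ≤ m)
    (hj : ¬ σ.SameCycle j (-j)) :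
    phi qp qm (swap j ((m : ℤ) + 1) * (swap (-j) (-((m : ℤ) + 1)) * σ)) = qp * phi qp qm σ := by
  have hjabs := abs_le.1 hjm
  have key := orbitSum_swapPair_mul hσ hj0 hjm
  have hμj := cycleSet_swap_mul_of_notMem (Bset.apply_neg_succ hσ)
    (show j ∉ insert _ (cycleSet σ (-j)) from fun h =>
      (Set.mem_insert_iff.1 h).elim (by omega) fun h => hj h.symm)
  simp only [hμj] at key
  set n : ℤ := (m : ℤ) + 1
  have hfin := Bset.support_finite hσ
  have hc₁ := ncard_cycleSet_pos hfin (f := σ) j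
  have hc₂ := ncard_cycleSet_pos hfin (f := σ) (-j)
  have hcard₁ : (insert n (cycleSet σ j)).ncard = (cycleSet σ j).ncard + 1 :=
    ncard_insert_cycleSet hfin (Bset.apply_succ hσ) (by omega)
  have hcard₂ : (insert (-n) (cycleSet σ (-j))).ncard = (cycleSet σ (-j)).ncard + 1 :=
    ncard_insert_cycleSet hfin (Bset.apply_neg_succ hσ) (by omega)
  obtain ⟨pC₁, nC₁, iC₁⟩ := weights_of_negSet_ne (negSet_ne_of_mem_of_notMem
    (O := cycleSet σ j) (x := -j) (by rw [neg_neg]; exact mem_cycleSet_self σ j) hj)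
  obtain ⟨pC₂, nC₂, iC₂⟩ := weights_of_negSet_ne (negSet_ne_of_mem_of_notMem (x := j)
    (mem_cycleSet_self σ (-j)) fun h => hj h.symm)
  have hnnI₁ : -n ∉ insert n (cycleSet σ j) := fun h => (Set.mem_insert_iff.1 h).elim
    (by omega) (notMem_cycleSet_of_apply_eq (Bset.apply_neg_succ hσ) (by omega))
  have hnI₂ : n ∉ insert (-n) (cycleSet σ (-j)) := fun h => (Set.mem_insert_iff.1 h).elim
    (by omega) (notMem_cycleSet_of_apply_eq (Bset.apply_succ hσ) (by omega))
  obtain ⟨p₁, n₁, i₁⟩ := weights_of_negSet_ne (negSet_ne_of_mem_of_notMem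
    (by rw [neg_neg]; exact Set.mem_insert n _) hnnI₁)
  obtain ⟨p₂, n₂, i₂⟩ := weights_of_negSet_ne (negSet_ne_of_mem_of_notMem
    (Set.mem_insert (-n) _) hnI₂)
  refine (phi_eq_of_orbitSum (τ := σ) (a := 1) (b := 0) (c := 0) ?_ ?_ ?_).trans (by ring)
  · have := key posWeight fun x hx => (weights_singleton hx).1
    omega
  · have := key negWeight fun x hx => (weights_singleton hx).2.1
    omega
  · have := key negIndicator fun x hx => (weights_singleton hx).2.2
    omega

theorem phi_swapPair_mul (hσ : σ ∈ Bset m) (hj0 : j ≠ 0) (hjm : |j| ≤ m) :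
    phi qp qm (swap j ((m : ℤ) + 1) * swap (-j) (-((m : ℤ) + 1)) * σ) = qp * phi qp qm σ := by
  rw [mul_assoc]
  by_cases hj : σ.SameCycle j (-j)
  · exact phi_swapPair_mul_of_sameCycle hσ hj0 hjm hj
  · exact phi_swapPair_mul_of_not_sameCycle hσ hj0 hjm hj

end PhiCosets

section Operators

variable {α : Type*} {n m : ℕ} {σ τ : Perm ℤ}

theorem permRestrict_apply (hσ : σ ∈ Bset n) (x : SIdx n) : (permRestrict n σ x : ℤ) = σ x := by
  rw [permRestrict, dif_pos (Bset.mapsTo_SIdx hσ)]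
  rfl

theorem permRestrict_mul (hσ : σ ∈ Bset n) (hτ : τ ∈ Bset n) :
    permRestrict n (σ * τ) = permRestrict n σ * permRestrict n τ := by
  ext i
  rw [permRestrict_apply (Bset.mul_mem hσ hτ), mul_apply, mul_apply, permRestrict_apply hσ,
    permRestrict_apply hτ]

theorem permRestrict_one : permRestrict n 1 = 1 := by
  ext i
  rw [permRestrict_apply (Bset.one_mem n)]
  rfl

theorem Bset.finite (n : ℕ) : (Bset n).Finite := by
  refine Set.Finite.of_finite_image (Set.toFinite (permRestrict n '' Bset n)) ?_
  intro σ hσ τ hτ h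
  ext i
  by_cases hi : i ≠ 0 ∧ |i| ≤ (n : ℤ)
  · simpa [permRestrict_apply hσ, permRestrict_apply hτ] using
      congrArg (fun π : Perm (SIdx n) => (π ⟨i, hi⟩ : ℤ)) h
  · rcases not_and_or.1 hi with hi | hi
    · rw [not_not.1 hi, Bset.apply_zero hσ, Bset.apply_zero hτ]
    · rw [hσ.2 i (not_le.1 hi), hτ.2 i (not_le.1 hi)]

theorem SIdx.succ_eq_of_not_le (i : SIdx (m + 1)) (hi : ¬ |(i : ℤ)| ≤ m) :
    (i : ℤ) = (m : ℤ) + 1 ∨ (i : ℤ) = -((m : ℤ) + 1) := by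
  have h := i.2.2
  push_cast at h
  rcases abs_cases (i : ℤ) with ⟨h1, -⟩ | ⟨h1, -⟩ <;> omega

theorem upFn_downFn_comp (hσ : σ ∈ Bset m) (v : SIdx (m + 1) → α) :
    upFn (downFn v ∘ permRestrict m σ) (v (negEnd m)) (v (posEnd m))
      = v ∘ permRestrict (m + 1) σ := by
  have hσ' := Bset.mono (Nat.le_succ m) hσ
  funext i
  simp only [Function.comp_apply, upFn, downFn]
  split_ifs with hi hneg <;> congr 1 <;> ext <;> rw [permRestrict_apply hσ']
  · exact permRestrict_apply hσ _
  · rcases SIdx.succ_eq_of_not_le i (fun h => hi ⟨i.2.1, h⟩) with h | h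
    · omega
    · rw [h, Bset.apply_neg_succ hσ]; rfl
  · rcases SIdx.succ_eq_of_not_le i (fun h => hi ⟨i.2.1, h⟩) with h | h
    · rw [h, Bset.apply_succ hσ]; rfl
    · omega

variable [DecidableEq α]

theorem act_single (σ : Perm ℤ) (v : SIdx n → α) (c : ℂ) :
    act α n σ (Finsupp.single v c) = Finsupp.single (v ∘ permRestrict n σ) c := by
  rw [act, Finsupp.lmapDomain_apply, Finsupp.mapDomain_single]

theorem act_mul (hσ : σ ∈ Bset n) (hτ : τ ∈ Bset n) :
    act α n (σ * τ) = act α n τ * act α n σ := by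
  refine Finsupp.lhom_ext fun v c => ?_
  rw [Module.End.mul_apply, act_single, act_single, act_single, permRestrict_mul hσ hτ,
    coe_mul, Function.comp_assoc]

theorem act_one : act α n 1 = 1 := by
  refine Finsupp.lhom_ext fun v c => ?_
  rw [act_single, permRestrict_one, coe_one, Function.comp_id]
  rfl

theorem Pop_eq_sum (α : Type*) [DecidableEq α] (n : ℕ) (qp qm : ℂ) :
    Pop α n qp qm = ∑ σ ∈ (Bset.finite n).toFinset, phi qp qm σ • act α n σ :=
  finsum_mem_eq_finite_toFinset_sum _ (Bset.finite n)

theorem embedMid_single (T : Ksp α n →ₗ[ℂ] Ksp α n) (v : SIdx (n + 1) → α) (c : ℂ) :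
    embedMid α n T (Finsupp.single v c)
      = c • Finsupp.mapDomain (fun w : SIdx n → α => upFn w (v (negEnd n)) (v (posEnd n)))
          (T (Finsupp.single (downFn v) 1)) := by
  rw [embedMid, Finsupp.lsum_single, LinearMap.toSpanSingleton_apply]

theorem embedMid_sum_smul {ι : Type*} (s : Finset ι) (c : ι → ℂ) (T : ι → Ksp α n →ₗ[ℂ] Ksp α n) :
    embedMid α n (∑ i ∈ s, c i • T i) = ∑ i ∈ s, c i • embedMid α n (T i) := by
  refine Finsupp.lhom_ext fun v b => ?_
  simp only [embedMid_single, LinearMap.sum_apply, LinearMap.smul_apply,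
    Finsupp.mapDomain_finsetSum, Finsupp.mapDomain_smul, Finset.smul_sum, smul_comm b]

theorem embedMid_act (hσ : σ ∈ Bset m) : embedMid α m (act α m σ) = act α (m + 1) σ := by
  refine Finsupp.lhom_ext fun v c => ?_
  rw [embedMid_single, act_single, act_single, Finsupp.mapDomain_single, upFn_downFn_comp hσ v,
    Finsupp.smul_single, smul_eq_mul, mul_one]

end Operators

def signedRange (n : ℤ) : Finset ℤ := (Finset.Icc (-n) n).erase 0

theorem mem_signedRange {n k : ℤ} : k ∈ signedRange n ↔ k ≠ 0 ∧ |k| ≤ n := by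
  rw [signedRange, Finset.mem_erase, Finset.mem_Icc, abs_le]

theorem signedRange_succ (m : ℕ) :
    signedRange ((m : ℤ) + 1) = insert ((m : ℤ) + 1) (insert (-((m : ℤ) + 1)) (signedRange m)) := by
  ext k
  simp only [Finset.mem_insert, mem_signedRange, abs_le]
  omega

/-- The representative `e` of the coset `e * B(n-1)` of the elements of `B(n)` sending `n`
to `k`. -/
def cosetRep (n k : ℤ) : Perm ℤ :=
  if k = n then 1 else if k = -n then swap (-n) n else swap k n * swap (-k) (-n)

def cosetWeight (qp qm : ℂ) (n k : ℤ) : ℂ := if k = n then 1 else if k = -n then qm else qp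

section Cosets

variable {m : ℕ} {k : ℤ}

theorem cosetRep_mem (hk : k ∈ signedRange ((m : ℤ) + 1)) :
    cosetRep ((m : ℤ) + 1) k ∈ Bset (m + 1) := by
  rw [mem_signedRange, abs_le] at hk
  refine ⟨fun i => ?_, fun i hi => ?_⟩
  · unfold cosetRep
    split_ifs <;> simp only [mul_apply, swap_apply_def, one_apply] <;>
    (try split_ifs) <;> omega
  · push_cast at hi
    have hi' := lt_abs.1 hi
    unfold cosetRep
    split_ifs <;> simp only [mul_apply, swap_apply_def, one_apply] <;>
    (try split_ifs) <;> omega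

theorem cosetRep_apply (hk : k ∈ signedRange ((m : ℤ) + 1)) :
    cosetRep ((m : ℤ) + 1) k ((m : ℤ) + 1) = k := by
  rw [mem_signedRange, abs_le] at hk
  unfold cosetRep
  split_ifs <;> simp only [mul_apply, swap_apply_def, one_apply] <;>
    (try split_ifs) <;> omega

theorem cosetRep_mul_self (hk : k ∈ signedRange ((m : ℤ) + 1)) :
    cosetRep ((m : ℤ) + 1) k * cosetRep ((m : ℤ) + 1) k = 1 := by
  rw [mem_signedRange, abs_le] at hk
  ext i
  unfold cosetRep
  split_ifs <;> simp only [mul_apply, swap_apply_def, one_apply] <;>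
    (try split_ifs) <;> omega

theorem cosetRep_apply_self (hk : k ∈ signedRange ((m : ℤ) + 1)) :
    cosetRep ((m : ℤ) + 1) k k = (m : ℤ) + 1 := by
  rw [mem_signedRange, abs_le] at hk
  unfold cosetRep
  split_ifs <;> simp only [mul_apply, swap_apply_def, one_apply] <;>
    (try split_ifs) <;> omega

theorem phi_cosetRep_mul {qp qm : ℂ} {σ : Perm ℤ} (hσ : σ ∈ Bset m)
    (hk : k ∈ signedRange ((m : ℤ) + 1)) :
    phi qp qm (cosetRep ((m : ℤ) + 1) k * σ)
      = cosetWeight qp qm ((m : ℤ) + 1) k * phi qp qm σ := by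
  rw [mem_signedRange] at hk
  unfold cosetRep cosetWeight
  split_ifs with hn hnn
  · rw [one_mul, one_mul]
  · exact phi_swap_neg_mul hσ
  · refine phi_swapPair_mul hσ hk.1 ?_
    have := abs_le.1 hk.2
    exact abs_le.2 (by omega)

theorem Bset.apply_succ_mem_signedRange {σ : Perm ℤ} (hσ : σ ∈ Bset (m + 1)) :
    σ ((m : ℤ) + 1) ∈ signedRange ((m : ℤ) + 1) := by
  have := (Bset.mapsTo_SIdx hσ ((m : ℤ) + 1)).1 ⟨by omega, by rw [abs_of_pos (by omega)]; simp⟩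
  rw [mem_signedRange]
  simpa using this

end Cosets

section Decomposition

variable (α : Type*) [DecidableEq α] (m : ℕ) (qp qm : ℂ)

theorem Pop_succ_eq_sum :
    Pop α (m + 1) qp qm = ∑ k ∈ signedRange ((m : ℤ) + 1), ∑ σ ∈ (Bset.finite m).toFinset,
      (cosetWeight qp qm ((m : ℤ) + 1) k * phi qp qm σ)
        • (act α (m + 1) σ * act α (m + 1) (cosetRep ((m : ℤ) + 1) k)) := by
  rw [Pop_eq_sum, ← Finset.sum_product']
  refine (Finset.sum_nbij' (fun p => cosetRep ((m : ℤ) + 1) p.1 * p.2)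
    (fun σ => (σ ((m : ℤ) + 1), cosetRep ((m : ℤ) + 1) (σ ((m : ℤ) + 1)) * σ))
    ?_ ?_ ?_ ?_ ?_).symm <;> simp only [Finset.mem_product, Set.Finite.mem_toFinset, Prod.forall]
  · exact fun k σ ⟨hk, hσ⟩ => Bset.mul_mem (cosetRep_mem hk) (Bset.mono (Nat.le_succ m) hσ)
  · intro σ hσ
    have hσn := Bset.apply_succ_mem_signedRange hσ
    refine ⟨hσn, Bset.of_apply_succ (Bset.mul_mem (cosetRep_mem hσn) hσ) ?_⟩
    rw [mul_apply, cosetRep_apply_self hσn]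
  · intro k σ ⟨hk, hσ⟩
    rw [mul_apply, Bset.apply_succ hσ, cosetRep_apply hk, ← mul_assoc, cosetRep_mul_self hk,
      one_mul]
  · intro σ hσ
    rw [← mul_assoc, cosetRep_mul_self (Bset.apply_succ_mem_signedRange hσ), one_mul]
  · intro k σ ⟨hk, hσ⟩
    rw [phi_cosetRep_mul hσ hk, act_mul (cosetRep_mem hk) (Bset.mono (Nat.le_succ m) hσ)]

theorem Rop_eq_sum :
    Rop α (m + 1) qp qm = ∑ k ∈ signedRange ((m : ℤ) + 1),
      cosetWeight qp qm ((m : ℤ) + 1) k • act α (m + 1) (cosetRep ((m : ℤ) + 1) k) := by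
  have hJ : (Finset.Icc (-((m + 1 : ℕ) : ℤ) + 1) (((m + 1 : ℕ) : ℤ) - 1)).erase 0
      = signedRange m := by
    ext k
    simp only [signedRange, Finset.mem_erase, Finset.mem_Icc]
    omega
  have hn : (m : ℤ) + 1 ∉ insert (-((m : ℤ) + 1)) (signedRange m) := by
    simp only [Finset.mem_insert, mem_signedRange, abs_le]
    omega
  have hnn : -((m : ℤ) + 1) ∉ signedRange m := by
    simp only [mem_signedRange, abs_le]
    omega
  rw [Rop, hJ, signedRange_succ, Finset.sum_insert hn, Finset.sum_insert hnn, Finset.smul_sum,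
    Nat.cast_succ, add_assoc]
  congr 1
  · rw [cosetWeight, cosetRep, if_pos rfl, if_pos rfl, one_smul, act_one]
    rfl
  · congr 1
    · rw [cosetWeight, cosetRep, if_neg (by omega), if_pos rfl, if_neg (by omega), if_pos rfl]
    · refine Finset.sum_congr rfl fun j hj => ?_
      rw [mem_signedRange, abs_le] at hj
      rw [cosetWeight, cosetRep, if_neg (by omega), if_neg (by omega), if_neg (by omega),
        if_neg (by omega)]

end Decomposition

/-- the decomposition P^{(n)} = (id ⊗ P^{(n−1)} ⊗ id) ∘ R^{(n)} of the
type-B symmetrization operator, for every n = m+1 ≥ 1. -/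
theorem symmetrizer_decomposition (α : Type*) [DecidableEq α] (qp qm : ℂ) (m : ℕ) :
    Pop α (m + 1) qp qm
      = (embedMid α m (Pop α m qp qm)) ∘ₗ (Rop α (m + 1) qp qm) := by
  rw [← Module.End.mul_eq_comp, Pop_succ_eq_sum, Rop_eq_sum, Pop_eq_sum, embedMid_sum_smul,
    Finset.sum_mul_sum, Finset.sum_comm]
  refine Finset.sum_congr rfl fun σ hσ => Finset.sum_congr rfl fun k _ => ?_
  rw [embedMid_act ((Bset.finite m).mem_toFinset.1 hσ), smul_mul_smul_comm, mul_comm]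

end TypeB
end
end
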